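/- arXiv:2409.16173 — 3 statements merged into one kernel-verified Lean document; each statement's English description precedes it below -/
import Mathlib

section
/- For every roommates instance with ties and real numbers 0<γ_e^v<δ_e^v given for every incident vertex–edge pair, there exists a γ-stable half-matching M such that every γ-stable fractional-matching N satisfies Σ_{e∈E} N(e) ≤ (3/2)·Σ_{e∈E} M(e). -/
open Finset

set_option linter.unusedSectionVars false
set_option maxHeartbeats 1000000

namespace SR

variable {V E : Type*} [Fintype V] [Fintype E] [DecidableEq V] [DecidableEq E]

/-- The set of edges incident to a vertex `v`.  A multigraph is given by a finite
edge type `E`, a finite vertex type `V` and two endpoint maps `es et : E → V`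
(each edge is the unordered pair of its two distinct endpoints; the orientation
merely records a fixed ordering of the vertices). -/
def incident (es et : E → V) (v : V) : Finset E :=
  univ.filter fun e => es e = v ∨ et e = v

/-- `Σ_{e ∈ E(v)} M(e)`. -/
noncomputable def degSum (es et : E → V) (M : E → ℝ) (v : V) : ℝ :=
  ∑ e ∈ incident es et v, M e

/-- A fractional-matching. -/
def IsFrac (es et : E → V) (M : E → ℝ) : Prop :=
  (∀ e, 0 ≤ M e) ∧ ∀ v, degSum es et M v ≤ 1

/-- A half-matching. -/
def IsHalf (es et : E → V) (M : E → ℝ) : Prop :=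
  IsFrac es et M ∧ ∀ e, M e = 0 ∨ M e = 1 / 2 ∨ M e = 1

/-- An integral matching (as a fractional-matching). -/
def IsIntegral (M : E → ℝ) : Prop := ∀ e, M e = 0 ∨ M e = 1

/-- The size `Σ_{e ∈ E} M(e)` of a fractional-matching. -/
noncomputable def size (M : E → ℝ) : ℝ := ∑ e, M e

/-- `v` is saturated by `M`. -/
def Saturated (es et : E → V) (M : E → ℝ) (v : V) : Prop :=
  degSum es et M v = 1

/-- `p_v(M)`: the minimum of `p_v(e)` over incident edges with `M(e) > 0` if `v`
is saturated, and `p_v(∅)` otherwise. -/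
noncomputable def pval (es et : E → V) (p : V → E → ℝ) (pE : V → ℝ)
    (M : E → ℝ) (v : V) : ℝ :=
  if h : degSum es et M v = 1 ∧ ((incident es et v).filter fun e => 0 < M e).Nonempty
  then ((incident es et v).filter fun e => 0 < M e).inf' h.2 (p v)
  else pE v

/-- An edge blocks `M` (weak stability, preferences with ties). -/
def WeakBlocks (es et : E → V) (p : V → E → ℝ) (pE : V → ℝ)
    (M : E → ℝ) (e : E) : Prop :=
  M e < 1 ∧ pval es et p pE M (es e) < p (es e) e ∧
    pval es et p pE M (et e) < p (et e) e

/-- Weak stability. -/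
def WeaklyStable (es et : E → V) (p : V → E → ℝ) (pE : V → ℝ)
    (M : E → ℝ) : Prop :=
  ∀ e, ¬ WeakBlocks es et p pE M e

/-- An edge `γ`-blocks `M`. -/
def GammaBlocks (es et : E → V) (p : V → E → ℝ) (pE : V → ℝ)
    (γ δ : V → E → ℝ) (M : E → ℝ) (e : E) : Prop :=
  0 ≤ min (p (es e) e - pval es et p pE M (es e) - γ (es e) e)
        (p (et e) e - pval es et p pE M (et e) - δ (et e) e) ∨
  0 ≤ min (p (es e) e - pval es et p pE M (es e) - δ (es e) e)
        (p (et e) e - pval es et p pE M (et e) - γ (et e) e)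

/-- `γ`-stability. -/
def GammaStable (es et : E → V) (p : V → E → ℝ) (pE : V → ℝ)
    (γ δ : V → E → ℝ) (M : E → ℝ) : Prop :=
  ∀ e, ¬ GammaBlocks es et p pE γ δ M e

/-- `pref v` is a strict linear order on the edges incident to `v`, for each `v`. -/
def IsStrictPref (es et : E → V) (pref : V → E → E → Prop) : Prop :=
  ∀ v, (∀ e ∈ incident es et v, ¬ pref v e e) ∧
    (∀ e ∈ incident es et v, ∀ f ∈ incident es et v, ∀ g ∈ incident es et v,
      pref v e f → pref v f g → pref v e g) ∧
    (∀ e ∈ incident es et v, ∀ f ∈ incident es et v, e ≠ f → pref v e f ∨ pref v f e)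

/-- An edge blocks `M` (strict preferences). -/
def StrictBlocks (es et : E → V) (pref : V → E → E → Prop)
    (M : E → ℝ) (e : E) : Prop :=
  M e < 1 ∧ ∀ w, (es e = w ∨ et e = w) →
    (¬ Saturated es et M w ∨ ∃ f ∈ incident es et w, 0 < M f ∧ pref w e f)

/-- Stability for strict preferences. -/
def StableStrict (es et : E → V) (pref : V → E → E → Prop) (M : E → ℝ) : Prop :=
  ∀ e, ¬ StrictBlocks es et pref M e

/-- The extension of the strict preferences of `v` to `E(v) ∪ {∅}`, where `∅ = none`. -/
def prefExt (pref : V → E → E → Prop) (v : V) : Option E → Option E → Prop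
  | some e, some f => pref v e f
  | some _, none => True
  | none, _ => False

/-- `vote_v(a,b) ∈ {+1, 0, -1}`. -/
noncomputable def vote (pref : V → E → E → Prop) (v : V) (a b : Option E) : ℝ :=
  haveI : Decidable (prefExt pref v a b) := Classical.propDecidable _
  if a = b then 0 else if prefExt pref v a b then 1 else -1

/-- `E(v) ∪ {∅}` as a finset of `Option E`. -/
def optIncident (es et : E → V) (v : V) : Finset (Option E) :=
  insert none ((incident es et v).map Function.Embedding.some)

/-- A feasible pairing between the fractional-matchings `M` and `N`. -/
def FeasiblePairing (es et : E → V) (M N : E → ℝ)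
    (φ : V → Option E → Option E → ℝ) : Prop :=
  (∀ v a b, 0 ≤ φ v a b) ∧
  (∀ v, ∀ e ∈ incident es et v,
      ∑ f ∈ optIncident es et v, φ v (some e) f = max (M e - N e) 0) ∧
  (∀ v, ∀ e ∈ incident es et v,
      ∑ f ∈ optIncident es et v, φ v f (some e) = max (N e - M e) 0) ∧
  (∀ v, ∑ f ∈ optIncident es et v, φ v f none
      = max (degSum es et M v - degSum es et N v) 0) ∧
  (∀ v, ∑ f ∈ optIncident es et v, φ v none f
      = max (degSum es et N v - degSum es et M v) 0)

/-- A sensible pairing between the fractional-matchings `M` and `N`. -/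
def SensiblePairing (es et : E → V) (M N : E → ℝ)
    (φ : V → Option E → Option E → ℝ) : Prop :=
  (∀ v a b, 0 ≤ φ v a b) ∧
  (∀ v, ∀ e ∈ incident es et v,
      ∑ f ∈ optIncident es et v, φ v (some e) f = M e) ∧
  (∀ v, ∀ e ∈ incident es et v,
      ∑ f ∈ optIncident es et v, φ v f (some e) = N e) ∧
  (∀ v, 0 < ∑ f ∈ optIncident es et v, φ v none f → degSum es et M v < 1) ∧
  (∀ v, 0 < ∑ f ∈ optIncident es et v, φ v f none → degSum es et N v < 1) ∧
  (∀ e, φ (es e) (some e) (some e) = φ (et e) (some e) (some e))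

/-- `Δ(M,N,φ)`. -/
noncomputable def Delta (es et : E → V) (pref : V → E → E → Prop)
    (φ : V → Option E → Option E → ℝ) : ℝ :=
  ∑ v, ∑ a ∈ optIncident es et v, ∑ b ∈ optIncident es et v,
    φ v a b * vote pref v a b

/-- A popular fractional-matching. -/
def PopularFrac (es et : E → V) (pref : V → E → E → Prop) (M : E → ℝ) : Prop :=
  ∀ N, IsFrac es et N → ∀ φ, FeasiblePairing es et M N φ → 0 ≤ Delta es et pref φ

/-- An extra-popular fractional-matching. -/
def ExtraPopular (es et : E → V) (pref : V → E → E → Prop) (M : E → ℝ) : Prop :=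
  ∀ N, IsFrac es et N → ∀ φ, SensiblePairing es et M N φ → 0 ≤ Delta es et pref φ

/-- A barely-defendable fractional-matching. -/
def BarelyDefendable (es et : E → V) (pref : V → E → E → Prop) (M : E → ℝ) : Prop :=
  ∀ N, IsFrac es et N → ∃ φ, SensiblePairing es et M N φ ∧ 0 ≤ Delta es et pref φ

/-- The mixed comparison score of `M` versus `N`. -/
noncomputable def mixedScore (es et : E → V) (pref : V → E → E → Prop)
    (M N : E → ℝ) : ℝ :=
  ∑ v, ((∑ e ∈ incident es et v, ∑ f ∈ incident es et v,
        M e * N f * vote pref v (some e) (some f))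
    + (∑ e ∈ incident es et v,
        M e * (1 - degSum es et N v) * vote pref v (some e) none)
    + (∑ f ∈ incident es et v,
        N f * (1 - degSum es et M v) * vote pref v none (some f)))

/-- A popular mixed-matching. -/
def PopularMixed (es et : E → V) (pref : V → E → E → Prop) (M : E → ℝ) : Prop :=
  ∀ N, IsFrac es et N → 0 ≤ mixedScore es et pref M N

/-- The weight `Σ_e ω(e)·M(e)` of a fractional-matching. -/
noncomputable def wsize (ω M : E → ℝ) : ℝ := ∑ e, ω e * M e



-- ======================= auxiliary development =======================

section Glue
variable (es et : E → V) (p : V → E → ℝ) (pE : V → ℝ)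

lemma es_mem_incident (e : E) : e ∈ incident es et (es e) := by
  simp [incident]

lemma et_mem_incident (e : E) : e ∈ incident es et (et e) := by
  simp [incident]

/-- If `v` is saturated by `M` and incident `p`-values are nonneg, `pval ≥ pE`.  -/
lemma pval_ge_pE
    (hp : ∀ v, ∀ e ∈ incident es et v, 0 ≤ p v e) (hpE : ∀ v, pE v ≤ 0)
    (M : E → ℝ) (v : V) : pE v ≤ pval es et p pE M v := by
  unfold pval
  split
  · rename_i h
    refine le_trans (hpE v) ?_
    refine Finset.le_inf' h.2 _ (fun e he => ?_)
    exact hp v e (Finset.mem_of_mem_filter e he)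
  · exact le_rfl

/-- pval monotone under support-shrinking & saturation-preserving replacement. -/
lemma pval_mono
    (hp : ∀ v, ∀ e ∈ incident es et v, 0 ≤ p v e) (hpE : ∀ v, pE v ≤ 0)
    (N M : E → ℝ) (hsupp : ∀ e, 0 < M e → 0 < N e)
    (hsat : ∀ v, degSum es et N v = 1 → degSum es et M v = 1)
    (hM0 : ∀ e, 0 ≤ M e) :
    ∀ v, pval es et p pE N v ≤ pval es et p pE M v := by
  intro v
  unfold pval
  by_cases hMc : degSum es et M v = 1 ∧ ((incident es et v).filter fun e => 0 < M e).Nonempty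
  · rw [dif_pos hMc]
    by_cases hNc : degSum es et N v = 1 ∧ ((incident es et v).filter fun e => 0 < N e).Nonempty
    · rw [dif_pos hNc]
      refine Finset.le_inf' hMc.2 _ (fun e he => ?_)
      have he' : e ∈ (incident es et v).filter fun e => 0 < N e := by
        rw [Finset.mem_filter] at he ⊢
        exact ⟨he.1, hsupp e he.2⟩
      exact Finset.inf'_le _ he'
    · rw [dif_neg hNc]
      refine le_trans (hpE v) ?_
      refine Finset.le_inf' hMc.2 _ (fun e he => ?_)
      exact hp v e (Finset.mem_of_mem_filter e he)
  · rw [dif_neg hMc]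
    by_cases hNc : degSum es et N v = 1 ∧ ((incident es et v).filter fun e => 0 < N e).Nonempty
    · exfalso
      apply hMc
      have hd := hsat v hNc.1
      refine ⟨hd, ?_⟩
      by_contra hemp
      rw [Finset.not_nonempty_iff_eq_empty] at hemp
      have : degSum es et M v = 0 := by
        unfold degSum
        refine Finset.sum_eq_zero (fun e he => ?_)
        by_contra h0
        have : 0 < M e := lt_of_le_of_ne (hM0 e) (Ne.symm h0)
        have : e ∈ (incident es et v).filter fun e => 0 < M e :=
          Finset.mem_filter.mpr ⟨he, this⟩
        simp [hemp] at this
      rw [this] at hd; norm_num at hd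
    · rw [dif_neg hNc]

/-- blocking transfers to matchings with smaller pval. -/
lemma gammaBlocks_mono (γ δ : V → E → ℝ) (N M : E → ℝ)
    (hpv : ∀ v, pval es et p pE N v ≤ pval es et p pE M v) (e : E)
    (hb : GammaBlocks es et p pE γ δ M e) : GammaBlocks es et p pE γ δ N e := by
  unfold GammaBlocks at hb ⊢
  have h1 := hpv (es e)
  have h2 := hpv (et e)
  rcases hb with hb | hb <;> rw [le_min_iff] at hb <;> [left; right] <;>
    rw [le_min_iff] <;> constructor <;> linarith [hb.1, hb.2]

/-- Weak stability in the `pval` sense. -/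
def WStable (es et : E → V) (p : V → E → ℝ) (pE : V → ℝ) (M : E → ℝ) : Prop :=
  ∀ e, p (es e) e ≤ pval es et p pE M (es e) ∨ p (et e) e ≤ pval es et p pE M (et e)

lemma WStable.gammaStable {es et : E → V} {p : V → E → ℝ} {pE : V → ℝ}
    {γ δ : V → E → ℝ} {M : E → ℝ}
    (hγ : ∀ v, ∀ e ∈ incident es et v, 0 < γ v e)
    (hγδ : ∀ v, ∀ e ∈ incident es et v, γ v e < δ v e)
    (hW : WStable es et p pE M) : GammaStable es et p pE γ δ M := by
  intro e hb
  have h1 : 0 < γ (es e) e := hγ _ e (es_mem_incident es et e)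
  have h2 : 0 < γ (et e) e := hγ _ e (et_mem_incident es et e)
  have h3 : γ (es e) e < δ (es e) e := hγδ _ e (es_mem_incident es et e)
  have h4 : γ (et e) e < δ (et e) e := hγδ _ e (et_mem_incident es et e)
  rcases hW e with hw | hw <;>
  · rcases hb with hb | hb <;> rw [le_min_iff] at hb <;> linarith [hb.1, hb.2]

end Glue


section Rounding
variable (es et : E → V)

/-- left endpoint in the bipartite double cover -/
def fa (f : E × Bool) : V := if f.2 = true then et f.1 else es f.1
/-- right endpoint in the bipartite double cover -/
def fb (f : E × Bool) : V := if f.2 = true then es f.1 else et f.1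

noncomputable def dL (y : E × Bool → ℝ) (u : V) : ℝ :=
  ∑ f ∈ univ.filter (fun f => fa es et f = u), y f
noncomputable def dR (y : E × Bool → ℝ) (u : V) : ℝ :=
  ∑ f ∈ univ.filter (fun f => fb es et f = u), y f

lemma dL_split (y : E × Bool → ℝ) (u : V) :
    dL es et y u = (∑ e ∈ univ.filter (fun e => es e = u), y (e, false))
      + ∑ e ∈ univ.filter (fun e => et e = u), y (e, true) := by
  unfold dL
  rw [Finset.sum_filter, Fintype.sum_prod_type]
  rw [Finset.sum_filter, Finset.sum_filter]
  rw [← Finset.sum_add_distrib]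
  refine Finset.sum_congr rfl (fun e _ => ?_)
  rw [Fintype.sum_bool]
  simp [fa]
  ring

lemma dR_split (y : E × Bool → ℝ) (u : V) :
    dR es et y u = (∑ e ∈ univ.filter (fun e => et e = u), y (e, false))
      + ∑ e ∈ univ.filter (fun e => es e = u), y (e, true) := by
  unfold dR
  rw [Finset.sum_filter, Fintype.sum_prod_type]
  rw [Finset.sum_filter, Finset.sum_filter]
  rw [← Finset.sum_add_distrib]
  refine Finset.sum_congr rfl (fun e _ => ?_)
  rw [Fintype.sum_bool]
  simp [fb]
  ring

lemma incident_sum_split (hne : ∀ e, es e ≠ et e) (g : E → ℝ) (u : V) :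
    ∑ e ∈ incident es et u, g e = (∑ e ∈ univ.filter (fun e => es e = u), g e)
      + ∑ e ∈ univ.filter (fun e => et e = u), g e := by
  unfold incident
  rw [Finset.sum_filter, Finset.sum_filter, Finset.sum_filter, ← Finset.sum_add_distrib]
  refine Finset.sum_congr rfl (fun e _ => ?_)
  by_cases h1 : es e = u <;> by_cases h2 : et e = u
  · exact absurd (h1.trans h2.symm) (hne e)
  all_goals simp [h1, h2]

lemma dL_add_dR (hne : ∀ e, es e ≠ et e) (y : E × Bool → ℝ) (u : V) :
    dL es et y u + dR es et y u = ∑ e ∈ incident es et u, (y (e, false) + y (e, true)) := by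
  rw [dL_split, dR_split, incident_sum_split es et hne]
  simp only [Finset.sum_add_distrib]
  ring

/-- the feasible polytope for the rounding argument -/
def Pfeas (N : E → ℝ) (y : E × Bool → ℝ) : Prop :=
  (∀ f, 0 ≤ y f) ∧ (∀ f : E × Bool, N f.1 = 0 → y f = 0) ∧
  (∀ u, dL es et y u ≤ 1) ∧ (∀ u, dR es et y u ≤ 1) ∧
  (∀ u, degSum es et N u = 1 → dL es et y u = 1 ∧ dR es et y u = 1)

lemma y0_feas (hne : ∀ e, es e ≠ et e) (N : E → ℝ)
    (hN0 : ∀ e, 0 ≤ N e) (hN1 : ∀ v, degSum es et N v ≤ 1) :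
    Pfeas es et N (fun f => N f.1) := by
  have hdl : ∀ u, dL es et (fun f => N f.1) u = degSum es et N u := by
    intro u
    rw [dL_split, degSum, incident_sum_split es et hne]
  have hdr : ∀ u, dR es et (fun f => N f.1) u = degSum es et N u := by
    intro u
    rw [dR_split, degSum, incident_sum_split es et hne]
    ring
  exact ⟨fun f => hN0 f.1, fun f h => h, fun u => (hdl u) ▸ hN1 u,
    fun u => (hdr u) ▸ hN1 u, fun u h => ⟨(hdl u).trans h, (hdr u).trans h⟩⟩

lemma Pfeas_le_one (N : E → ℝ) (y : E × Bool → ℝ) (hy : Pfeas es et N y) (f : E × Bool) :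
    y f ≤ 1 := by
  refine le_trans ?_ (hy.2.2.1 (fa es et f))
  unfold dL
  refine Finset.single_le_sum (fun g _ => hy.1 g) ?_
  simp

lemma Pfeas_closed (N : E → ℝ) : IsClosed {y : E × Bool → ℝ | Pfeas es et N y} := by
  have hc : ∀ (s : Finset (E × Bool)), Continuous (fun y : E × Bool → ℝ => ∑ f ∈ s, y f) :=
    fun s => continuous_finset_sum s (fun f _ => continuous_apply f)
  have hrw : {y : E × Bool → ℝ | Pfeas es et N y} =
      (⋂ f, {y : E × Bool → ℝ | 0 ≤ y f}) ∩
      ((⋂ f : E × Bool, {y : E × Bool → ℝ | N f.1 = 0 → y f = 0}) ∩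
      ((⋂ u, {y : E × Bool → ℝ | dL es et y u ≤ 1}) ∩
      ((⋂ u, {y : E × Bool → ℝ | dR es et y u ≤ 1}) ∩
      (⋂ u, {y : E × Bool → ℝ | degSum es et N u = 1 → dL es et y u = 1 ∧ dR es et y u = 1})))) := by
    ext y
    simp only [Set.mem_setOf_eq, Set.mem_inter_iff, Set.mem_iInter, Pfeas]
  rw [hrw]
  refine IsClosed.inter (isClosed_iInter (fun f =>
      isClosed_le continuous_const (continuous_apply f))) ?_
  refine IsClosed.inter (isClosed_iInter (fun f => ?_)) ?_
  · by_cases h : N f.1 = 0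
    · have : {y : E × Bool → ℝ | N f.1 = 0 → y f = 0} = {y : E × Bool → ℝ | y f = 0} := by
        ext y; simp [h]
      rw [this]
      exact isClosed_eq (continuous_apply f) continuous_const
    · have : {y : E × Bool → ℝ | N f.1 = 0 → y f = 0} = Set.univ := by
        ext y; simp [h]
      rw [this]; exact isClosed_univ
  refine IsClosed.inter (isClosed_iInter (fun u =>
      isClosed_le (hc _) continuous_const)) ?_
  refine IsClosed.inter (isClosed_iInter (fun u =>
      isClosed_le (hc _) continuous_const)) ?_
  refine isClosed_iInter (fun u => ?_)
  by_cases h : degSum es et N u = 1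
  · have : {y : E × Bool → ℝ | degSum es et N u = 1 → dL es et y u = 1 ∧ dR es et y u = 1}
        = {y : E × Bool → ℝ | dL es et y u = 1} ∩ {y : E × Bool → ℝ | dR es et y u = 1} := by
      ext y; simp [h, Set.mem_inter_iff]
    rw [this]
    exact IsClosed.inter (isClosed_eq (hc _) continuous_const)
      (isClosed_eq (hc _) continuous_const)
  · have : {y : E × Bool → ℝ | degSum es et N u = 1 → dL es et y u = 1 ∧ dR es et y u = 1}
        = Set.univ := by
      ext y; simp [h]
    rw [this]; exact isClosed_univ

lemma Pfeas_compact (N : E → ℝ) : IsCompact {y : E × Bool → ℝ | Pfeas es et N y} := by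
  have hIcc : IsCompact (Set.univ.pi fun _ : E × Bool => Set.Icc (0:ℝ) 1) :=
    isCompact_univ_pi (fun _ => isCompact_Icc)
  refine IsCompact.of_isClosed_subset hIcc (Pfeas_closed es et N) ?_
  intro y hy
  rw [Set.mem_univ_pi]
  exact fun f => Set.mem_Icc.mpr ⟨hy.1 f, Pfeas_le_one es et N y hy f⟩

lemma sum_subtype_ite (s : Finset V) (x : V) (hx : x ∈ s) (r : ℝ) :
    ∑ u : ↥s, (if x = (u : V) then r else 0) = r := by
  rw [Finset.sum_coe_sort s (fun v => if x = v then r else 0)]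
  rw [Finset.sum_ite_eq s x (fun _ => r)]
  simp [hx]

lemma exists_direction (fa fb : E → V) (F' : Finset E) (hF' : F'.Nonempty)
    (STL STR : Finset V)
    (h2L : ∀ u ∈ STL, 2 ≤ (F'.filter (fun f => fa f = u)).card)
    (h2R : ∀ w ∈ STR, 2 ≤ (F'.filter (fun f => fb f = w)).card) :
    ∃ d : E → ℝ, d ≠ 0 ∧ (∀ f, d f ≠ 0 → f ∈ F') ∧
      (∀ u ∈ STL, ∑ f ∈ univ.filter (fun f => fa f = u), d f = 0) ∧
      (∀ w ∈ STR, ∑ f ∈ univ.filter (fun f => fb f = w), d f = 0) := by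
  classical
  set L : (↥F' → ℝ) →ₗ[ℝ] (↥STL → ℝ) × (↥STR → ℝ) :=
    LinearMap.prod
      (LinearMap.pi (fun u : ↥STL =>
        ∑ f : ↥F', if fa (f : E) = (u : V) then (LinearMap.proj f : (↥F' → ℝ) →ₗ[ℝ] ℝ) else 0))
      (LinearMap.pi (fun w : ↥STR =>
        ∑ f : ↥F', if fb (f : E) = (w : V) then (LinearMap.proj f : (↥F' → ℝ) →ₗ[ℝ] ℝ) else 0))
    with hL
  have hLapp1 : ∀ (c : ↥F' → ℝ) (u : ↥STL),
      (L c).1 u = ∑ f : ↥F', (if fa (f : E) = (u : V) then c f else 0) := by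
    intro c u
    simp only [hL, LinearMap.prod_apply, Function.prod, LinearMap.pi_apply, LinearMap.sum_apply]
    refine Finset.sum_congr rfl (fun f _ => ?_)
    by_cases h : fa (f : E) = (u : V) <;> simp [h]
  have hLapp2 : ∀ (c : ↥F' → ℝ) (w : ↥STR),
      (L c).2 w = ∑ f : ↥F', (if fb (f : E) = (w : V) then c f else 0) := by
    intro c w
    simp only [hL, LinearMap.prod_apply, Function.prod, LinearMap.pi_apply, LinearMap.sum_apply]
    refine Finset.sum_congr rfl (fun f _ => ?_)
    by_cases h : fb (f : E) = (w : V) <;> simp [h]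
  have hker : ∃ c : ↥F' → ℝ, c ≠ 0 ∧ L c = 0 := by
    by_contra hcon
    push_neg at hcon
    have hinj : Function.Injective L := by
      rw [← LinearMap.ker_eq_bot, Submodule.eq_bot_iff]
      intro c hc
      by_contra hc0
      exact (hcon c hc0) hc
    have hcardle : F'.card ≤ STL.card + STR.card := by
      have h1 := LinearMap.finrank_le_finrank_of_injective hinj
      simp only [Module.finrank_prod, Module.finrank_pi, Fintype.card_coe] at h1
      exact h1
    -- double counting
    have htL : ∑ u ∈ STL, (F'.filter (fun f => fa f = u)).card
        = ∑ f ∈ F', (if fa f ∈ STL then 1 else 0) := by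
      simp_rw [Finset.card_filter]
      rw [Finset.sum_comm]
      refine Finset.sum_congr rfl (fun f _ => ?_)
      rw [Finset.sum_ite_eq STL (fa f) (fun _ => 1)]
    have htR : ∑ w ∈ STR, (F'.filter (fun f => fb f = w)).card
        = ∑ f ∈ F', (if fb f ∈ STR then 1 else 0) := by
      simp_rw [Finset.card_filter]
      rw [Finset.sum_comm]
      refine Finset.sum_congr rfl (fun f _ => ?_)
      rw [Finset.sum_ite_eq STR (fb f) (fun _ => 1)]
    have hsupL : 2 * STL.card ≤ ∑ f ∈ F', (if fa f ∈ STL then 1 else 0) := by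
      rw [← htL]
      calc 2 * STL.card = ∑ _u ∈ STL, 2 := by rw [Finset.sum_const, smul_eq_mul, mul_comm]
      _ ≤ _ := Finset.sum_le_sum h2L
    have hsupR : 2 * STR.card ≤ ∑ f ∈ F', (if fb f ∈ STR then 1 else 0) := by
      rw [← htR]
      calc 2 * STR.card = ∑ _w ∈ STR, 2 := by rw [Finset.sum_const, smul_eq_mul, mul_comm]
      _ ≤ _ := Finset.sum_le_sum h2R
    have hbL : ∑ f ∈ F', (if fa f ∈ STL then 1 else 0) ≤ F'.card := by
      rw [Finset.card_eq_sum_ones]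
      refine Finset.sum_le_sum (fun f _ => ?_)
      by_cases h : fa f ∈ STL <;> simp [h]
    have hbR : ∑ f ∈ F', (if fb f ∈ STR then 1 else 0) ≤ F'.card := by
      rw [Finset.card_eq_sum_ones]
      refine Finset.sum_le_sum (fun f _ => ?_)
      by_cases h : fb f ∈ STR <;> simp [h]
    -- all inequalities are tight
    have heqL : ∑ f ∈ F', (if fa f ∈ STL then 1 else 0) = F'.card := by omega
    have heqR : ∑ f ∈ F', (if fb f ∈ STR then 1 else 0) = F'.card := by omega
    have hallL : ∀ f ∈ F', fa f ∈ STL := by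
      intro f hf
      by_contra hnot
      have : ∑ f ∈ F', (if fa f ∈ STL then 1 else 0) < F'.card := by
        rw [Finset.card_eq_sum_ones]
        refine Finset.sum_lt_sum (fun g _ => by by_cases h : fa g ∈ STL <;> simp [h])
          ⟨f, hf, by simp [hnot]⟩
      omega
    have hallR : ∀ f ∈ F', fb f ∈ STR := by
      intro f hf
      by_contra hnot
      have : ∑ f ∈ F', (if fb f ∈ STR then 1 else 0) < F'.card := by
        rw [Finset.card_eq_sum_ones]
        refine Finset.sum_lt_sum (fun g _ => by by_cases h : fb g ∈ STR <;> simp [h])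
          ⟨f, hf, by simp [hnot]⟩
      omega
    have hcardeq : F'.card = STL.card + STR.card := by omega
    -- surjectivity of L
    have hrange : LinearMap.range L = ⊤ := by
      apply Submodule.eq_top_of_finrank_eq
      rw [LinearMap.finrank_range_of_inj hinj]
      simp only [Module.finrank_prod, Module.finrank_pi, Fintype.card_coe]
      exact hcardeq
    obtain ⟨c, hc⟩ := LinearMap.range_eq_top.mp hrange ((fun _ => (1:ℝ)), 0)
    -- sum of all first components
    have hsum1 : ∑ u : ↥STL, (L c).1 u = STL.card := by
      rw [hc]; simp
    have hsum2 : ∑ w : ↥STR, (L c).2 w = 0 := by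
      rw [hc]; simp
    have hswap1 : ∑ u : ↥STL, (L c).1 u = ∑ f : ↥F', c f := by
      have : ∀ u : ↥STL, (L c).1 u = ∑ f : ↥F', (if fa (f : E) = (u : V) then c f else 0) :=
        hLapp1 c
      rw [Finset.sum_congr rfl (fun u _ => this u), Finset.sum_comm]
      refine Finset.sum_congr rfl (fun f _ => ?_)
      exact sum_subtype_ite STL (fa (f : E)) (hallL _ f.2) (c f)
    have hswap2 : ∑ w : ↥STR, (L c).2 w = ∑ f : ↥F', c f := by
      rw [Finset.sum_congr rfl (fun w _ => hLapp2 c w), Finset.sum_comm]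
      refine Finset.sum_congr rfl (fun f _ => ?_)
      exact sum_subtype_ite STR (fb (f : E)) (hallR _ f.2) (c f)
    have hSTLne : STL.Nonempty := ⟨fa hF'.choose, hallL _ hF'.choose_spec⟩
    have : (STL.card : ℝ) = 0 := by
      rw [← hsum1, hswap1, ← hswap2, hsum2]
    have h0 : STL.card = 0 := by exact_mod_cast this
    rw [Finset.card_eq_zero] at h0
    exact Finset.not_nonempty_empty (h0 ▸ hSTLne)
  obtain ⟨c, hc0, hcker⟩ := hker
  have hdval : ∀ (f : E) (h : f ∈ F'),
      (fun f => if h : f ∈ F' then c ⟨f, h⟩ else 0) f = c ⟨f, h⟩ := by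
    intro f h; simp [h]
  refine ⟨fun f => if h : f ∈ F' then c ⟨f, h⟩ else 0, ?_, ?_, ?_, ?_⟩
  · intro hd
    apply hc0
    funext f
    have := congrFun hd (f : E)
    simpa [f.2] using this
  · intro f hdf
    by_contra hf
    simp [hf] at hdf
  · intro u hu
    have h1 : (L c).1 ⟨u, hu⟩ = 0 := by rw [hcker]; rfl
    rw [hLapp1] at h1
    have h2 : ∑ f : ↥F', (if fa (f : E) = u then c f else 0)
        = ∑ f ∈ F', (if fa f = u then (if h : f ∈ F' then c ⟨f, h⟩ else 0) else 0) := by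
      rw [← Finset.sum_coe_sort F'
        (fun f => if fa f = u then (if h : f ∈ F' then c ⟨f, h⟩ else 0) else 0)]
      refine Finset.sum_congr rfl (fun f _ => ?_)
      by_cases h : fa (f : E) = u <;> simp [h, f.2]
    have h3 : ∑ f ∈ univ.filter (fun f => fa f = u),
        (if h : f ∈ F' then c ⟨f, h⟩ else 0)
        = ∑ f ∈ F', (if fa f = u then (if h : f ∈ F' then c ⟨f, h⟩ else 0) else 0) := by
      rw [Finset.sum_filter]
      refine (Finset.sum_subset (Finset.subset_univ F') (fun f _ hf => ?_)).symm
      by_cases h : fa f = u <;> simp [h, hf]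
    rw [h3, ← h2]
    exact h1
  · intro w hw
    have h1 : (L c).2 ⟨w, hw⟩ = 0 := by rw [hcker]; rfl
    rw [hLapp2] at h1
    have h2 : ∑ f : ↥F', (if fb (f : E) = w then c f else 0)
        = ∑ f ∈ F', (if fb f = w then (if h : f ∈ F' then c ⟨f, h⟩ else 0) else 0) := by
      rw [← Finset.sum_coe_sort F'
        (fun f => if fb f = w then (if h : f ∈ F' then c ⟨f, h⟩ else 0) else 0)]
      refine Finset.sum_congr rfl (fun f _ => ?_)
      by_cases h : fb (f : E) = w <;> simp [h, f.2]
    have h3 : ∑ f ∈ univ.filter (fun f => fb f = w),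
        (if h : f ∈ F' then c ⟨f, h⟩ else 0)
        = ∑ f ∈ F', (if fb f = w then (if h : f ∈ F' then c ⟨f, h⟩ else 0) else 0) := by
      rw [Finset.sum_filter]
      refine (Finset.sum_subset (Finset.subset_univ F') (fun f _ hf => ?_)).symm
      by_cases h : fb f = w <;> simp [h, hf]
    rw [h3, ← h2]
    exact h1


lemma dL_affine (y d : E × Bool → ℝ) (c : ℝ) (u : V) :
    dL es et (fun f => y f + c * d f) u = dL es et y u + c * dL es et d u := by
  unfold dL
  rw [Finset.sum_add_distrib, Finset.mul_sum]

lemma dR_affine (y d : E × Bool → ℝ) (c : ℝ) (u : V) :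
    dR es et (fun f => y f + c * d f) u = dR es et y u + c * dR es et d u := by
  unfold dR
  rw [Finset.sum_add_distrib, Finset.mul_sum]

lemma exists_eps (N : E → ℝ) (y d : E × Bool → ℝ) (hy : Pfeas es et N y)
    (hsupp : ∀ f, d f ≠ 0 → 0 < y f)
    (hdL : ∀ u, dL es et y u = 1 → dL es et d u = 0)
    (hdR : ∀ u, dR es et y u = 1 → dR es et d u = 0) :
    ∃ ε > 0, ∀ c : ℝ, |c| ≤ ε → Pfeas es et N (fun f => y f + c * d f) := by
  classical
  have hev : ∀ᶠ c : ℝ in nhds 0, Pfeas es et N (fun f => y f + c * d f) := by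
    have h1 : ∀ᶠ c : ℝ in nhds 0, ∀ f, 0 ≤ y f + c * d f := by
      rw [Filter.eventually_all]
      intro f
      by_cases hdf : d f = 0
      · filter_upwards with c
        simp [hdf]
        exact hy.1 f
      · have hpos := hsupp f hdf
        have ht : Filter.Tendsto (fun c : ℝ => y f + c * d f) (nhds 0) (nhds (y f)) := by
          have := ((continuous_const (y := y f)).add
            ((continuous_id).mul (continuous_const (y := d f)))).tendsto 0
          simpa [Pi.add_def, Pi.mul_def] using this
        filter_upwards [ht.eventually (eventually_gt_nhds hpos)] with c hc
        exact le_of_lt hc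
    have h2 : ∀ᶠ c : ℝ in nhds 0, ∀ f : E × Bool, N f.1 = 0 → y f + c * d f = 0 := by
      filter_upwards with c f hf
      have hy0 := hy.2.1 f hf
      have hd0 : d f = 0 := by
        by_contra hne
        have := hsupp f hne
        rw [hy0] at this
        exact lt_irrefl _ this
      simp [hy0, hd0]
    have h3 : ∀ᶠ c : ℝ in nhds 0, ∀ u, dL es et (fun f => y f + c * d f) u ≤ 1 := by
      rw [Filter.eventually_all]
      intro u
      by_cases ht : dL es et y u = 1
      · filter_upwards with c
        rw [dL_affine, ht, hdL u ht]
        ring_nf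
        exact le_rfl
      · have hlt : dL es et y u < 1 := lt_of_le_of_ne (hy.2.2.1 u) ht
        have htend : Filter.Tendsto (fun c : ℝ => dL es et y u + c * dL es et d u)
            (nhds 0) (nhds (dL es et y u)) := by
          have := ((continuous_const (y := dL es et y u)).add
            ((continuous_id).mul (continuous_const (y := dL es et d u)))).tendsto 0
          simpa [Pi.add_def, Pi.mul_def] using this
        filter_upwards [htend.eventually (eventually_lt_nhds hlt)] with c hc
        rw [dL_affine]
        exact le_of_lt hc
    have h4 : ∀ᶠ c : ℝ in nhds 0, ∀ u, dR es et (fun f => y f + c * d f) u ≤ 1 := by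
      rw [Filter.eventually_all]
      intro u
      by_cases ht : dR es et y u = 1
      · filter_upwards with c
        rw [dR_affine, ht, hdR u ht]
        ring_nf
        exact le_rfl
      · have hlt : dR es et y u < 1 := lt_of_le_of_ne (hy.2.2.2.1 u) ht
        have htend : Filter.Tendsto (fun c : ℝ => dR es et y u + c * dR es et d u)
            (nhds 0) (nhds (dR es et y u)) := by
          have := ((continuous_const (y := dR es et y u)).add
            ((continuous_id).mul (continuous_const (y := dR es et d u)))).tendsto 0
          simpa [Pi.add_def, Pi.mul_def] using this
        filter_upwards [htend.eventually (eventually_lt_nhds hlt)] with c hc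
        rw [dR_affine]
        exact le_of_lt hc
    have h5 : ∀ᶠ c : ℝ in nhds 0, ∀ u, degSum es et N u = 1 →
        dL es et (fun f => y f + c * d f) u = 1 ∧ dR es et (fun f => y f + c * d f) u = 1 := by
      filter_upwards with c u hu
      have h5L := (hy.2.2.2.2 u hu).1
      have h5R := (hy.2.2.2.2 u hu).2
      rw [dL_affine, dR_affine, h5L, h5R, hdL u h5L, hdR u h5R]
      constructor <;> ring
    filter_upwards [h1, h2, h3, h4, h5] with c hc1 hc2 hc3 hc4 hc5
    exact ⟨hc1, hc2, hc3, hc4, hc5⟩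
  rw [Metric.eventually_nhds_iff] at hev
  obtain ⟨ε, hε, h⟩ := hev
  refine ⟨ε / 2, by linarith, fun c hc => ?_⟩
  apply h
  rw [Real.dist_eq, sub_zero]
  linarith


lemma exists_integral_max (hne : ∀ e, es e ≠ et e) (N : E → ℝ)
    (hN0 : ∀ e, 0 ≤ N e) (hN1 : ∀ v, degSum es et N v ≤ 1) :
    ∃ y : E × Bool → ℝ, Pfeas es et N y ∧ (∀ f, y f = 0 ∨ y f = 1) ∧
      ∀ z : E × Bool → ℝ, Pfeas es et N z → ∑ f, z f ≤ ∑ f, y f := by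
  classical
  have hPne : (fun f : E × Bool => N f.1) ∈ {y | Pfeas es et N y} :=
    y0_feas es et hne N hN0 hN1
  have hcont : Continuous (fun y : E × Bool → ℝ => ∑ f, y f) :=
    continuous_finset_sum _ (fun f _ => continuous_apply f)
  obtain ⟨y₁, hy₁, hy₁max⟩ := (Pfeas_compact es et N).exists_isMaxOn ⟨_, hPne⟩
    hcont.continuousOn
  set s : ℝ := ∑ f, y₁ f with hs
  have hy₁max' : ∀ z, Pfeas es et N z → ∑ f, z f ≤ s := fun z hz => hy₁max hz
  set P2 : Set (E × Bool → ℝ) := {y | Pfeas es et N y} ∩ {y | ∑ f, y f = s} with hP2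
  have hP2c : IsCompact P2 :=
    (Pfeas_compact es et N).inter_right (isClosed_eq hcont continuous_const)
  have hΦcont : Continuous (fun y : E × Bool → ℝ => ∑ f, y f * (1 - y f)) :=
    continuous_finset_sum _ (fun f _ =>
      (continuous_apply f).mul (continuous_const.sub (continuous_apply f)))
  obtain ⟨y, hyP2, hymin⟩ := hP2c.exists_isMinOn ⟨y₁, hy₁, rfl⟩ hΦcont.continuousOn
  have hyP : Pfeas es et N y := hyP2.1
  have hysum : ∑ f, y f = s := hyP2.2
  refine ⟨y, hyP, ?_, fun z hz => (hy₁max' z hz).trans_eq hysum.symm⟩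
  -- integrality
  by_contra hcon
  push_neg at hcon
  obtain ⟨f₀, hf₀0, hf₀1⟩ := hcon
  set F' : Finset (E × Bool) := univ.filter (fun f => ¬(y f = 0 ∨ y f = 1)) with hF'def
  have hF'ne : F'.Nonempty :=
    ⟨f₀, Finset.mem_filter.mpr ⟨Finset.mem_univ f₀, by tauto⟩⟩
  have hfrac : ∀ f ∈ F', 0 < y f ∧ y f < 1 := by
    intro f hf
    rw [hF'def, Finset.mem_filter] at hf
    push_neg at hf
    exact ⟨lt_of_le_of_ne (hyP.1 f) (Ne.symm hf.2.1),
      lt_of_le_of_ne (Pfeas_le_one es et N y hyP f) hf.2.2⟩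
  set STL : Finset V := univ.filter
    (fun u => dL es et y u = 1 ∧ ∃ f ∈ F', fa es et f = u) with hSTLdef
  set STR : Finset V := univ.filter
    (fun u => dR es et y u = 1 ∧ ∃ f ∈ F', fb es et f = u) with hSTRdef
  -- a tight vertex touching a fractional edge touches at least two
  have key2 : ∀ (g : E × Bool → V) (dg : (E × Bool → ℝ) → V → ℝ),
      (∀ (z : E × Bool → ℝ) (u : V), dg z u = ∑ f ∈ univ.filter (fun f => g f = u), z f) →
      ∀ u, dg y u = 1 → ∀ f₁ ∈ F', g f₁ = u → 2 ≤ (F'.filter (fun f => g f = u)).card := by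
    intro g dg hdg u htight f₁ hf₁ hgf₁
    by_contra hlt
    push_neg at hlt
    have hcard1 : ∀ f ∈ F'.filter (fun f => g f = u), f = f₁ := by
      intro f hf
      have hf₁' : f₁ ∈ F'.filter (fun f => g f = u) := Finset.mem_filter.mpr ⟨hf₁, hgf₁⟩
      exact Finset.card_le_one.mp (by omega) f hf f₁ hf₁'
    -- the degree sum at u minus y f₁ is a sum of zeros and ones
    have hsplit : dg y u = y f₁ + ∑ f ∈ (univ.filter (fun f => g f = u)).erase f₁, y f := by
      rw [hdg]
      rw [← Finset.add_sum_erase _ _ (Finset.mem_filter.mpr ⟨Finset.mem_univ f₁, hgf₁⟩)]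
    have h01 : ∀ f ∈ (univ.filter (fun f => g f = u)).erase f₁, y f = 0 ∨ y f = 1 := by
      intro f hf
      by_contra hno
      have hfF' : f ∈ F' := by
        rw [hF'def, Finset.mem_filter]
        push_neg at hno
        exact ⟨Finset.mem_univ f, by tauto⟩
      have : f = f₁ := hcard1 f (Finset.mem_filter.mpr ⟨hfF',
        (Finset.mem_filter.mp (Finset.mem_of_mem_erase hf)).2⟩)
      exact (Finset.ne_of_mem_erase hf) this
    have hnat : ∑ f ∈ (univ.filter (fun f => g f = u)).erase f₁, y f
        = ((((univ.filter (fun f => g f = u)).erase f₁).filter (fun f => y f = 1)).card : ℝ) := by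
      rw [Finset.card_filter]
      push_cast
      refine Finset.sum_congr rfl (fun f hf => ?_)
      rcases h01 f hf with h | h <;> simp [h]
    set m := (((univ.filter (fun f => g f = u)).erase f₁).filter (fun f => y f = 1)).card with hm
    have hyf₁ : y f₁ = 1 - (m : ℝ) := by
      have := hsplit
      rw [htight, hnat] at this
      linarith
    have hf₁frac := hfrac f₁ hf₁
    rcases Nat.eq_zero_or_pos m with h | h
    · rw [h] at hyf₁
      simp at hyf₁
      linarith [hf₁frac.2]
    · have : (1 : ℝ) ≤ (m : ℝ) := by exact_mod_cast h
      linarith [hf₁frac.1]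
  have h2L : ∀ u ∈ STL, 2 ≤ (F'.filter (fun f => fa es et f = u)).card := by
    intro u hu
    rw [hSTLdef, Finset.mem_filter] at hu
    obtain ⟨f₁, hf₁, hgf₁⟩ := hu.2.2
    exact key2 (fa es et) (dL es et) (fun z u => rfl) u hu.2.1 f₁ hf₁ hgf₁
  have h2R : ∀ w ∈ STR, 2 ≤ (F'.filter (fun f => fb es et f = w)).card := by
    intro w hw
    rw [hSTRdef, Finset.mem_filter] at hw
    obtain ⟨f₁, hf₁, hgf₁⟩ := hw.2.2
    exact key2 (fb es et) (dR es et) (fun z u => rfl) w hw.2.1 f₁ hf₁ hgf₁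
  obtain ⟨d, hd0, hdsupp, hdSTL, hdSTR⟩ :=
    exists_direction (fa es et) (fb es et) F' hF'ne STL STR h2L h2R
  have hdL0 : ∀ u, dL es et y u = 1 → dL es et d u = 0 := by
    intro u htight
    by_cases htouch : ∃ f ∈ F', fa es et f = u
    · exact hdSTL u (Finset.mem_filter.mpr ⟨Finset.mem_univ u, htight, htouch⟩)
    · push_neg at htouch
      unfold dL
      refine Finset.sum_eq_zero (fun f hf => ?_)
      by_contra hne0
      exact (htouch f (hdsupp f hne0)) (Finset.mem_filter.mp hf).2
  have hdR0 : ∀ u, dR es et y u = 1 → dR es et d u = 0 := by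
    intro u htight
    by_cases htouch : ∃ f ∈ F', fb es et f = u
    · exact hdSTR u (Finset.mem_filter.mpr ⟨Finset.mem_univ u, htight, htouch⟩)
    · push_neg at htouch
      unfold dR
      refine Finset.sum_eq_zero (fun f hf => ?_)
      by_contra hne0
      exact (htouch f (hdsupp f hne0)) (Finset.mem_filter.mp hf).2
  have hdpos : ∀ f, d f ≠ 0 → 0 < y f := fun f h => (hfrac f (hdsupp f h)).1
  obtain ⟨ε, hε, hfeas⟩ := exists_eps es et N y d hyP hdpos hdL0 hdR0
  -- sum of d is zero by maximality
  have hsumd : ∑ f, d f = 0 := by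
    by_contra hsumne
    rcases lt_or_gt_of_ne hsumne with hneg | hpos
    · have hz := hfeas (-ε) (by rw [abs_neg, abs_of_pos hε])
      have := hy₁max' _ hz
      have hsum : ∑ f, (y f + (-ε) * d f) = s + (-ε) * ∑ f, d f := by
        rw [Finset.sum_add_distrib, hysum, ← Finset.mul_sum]
      rw [hsum] at this
      nlinarith
    · have hz := hfeas ε (by rw [abs_of_pos hε])
      have := hy₁max' _ hz
      have hsum : ∑ f, (y f + ε * d f) = s + ε * ∑ f, d f := by
        rw [Finset.sum_add_distrib, hysum, ← Finset.mul_sum]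
      rw [hsum] at this
      nlinarith
  -- strict decrease of the concave potential
  set Lns : ℝ := ∑ f, d f * (1 - 2 * y f) with hLns
  set c : ℝ := if Lns ≤ 0 then ε else -ε with hc
  have hcabs : |c| ≤ ε := by
    rw [hc]; split <;> simp [abs_of_pos hε, le_of_lt hε, abs_neg]
  have hc2 : c ^ 2 = ε ^ 2 := by
    rw [hc]; split <;> ring
  have hcL : c * Lns ≤ 0 := by
    rw [hc]; split
    · rename_i h; exact mul_nonpos_of_nonneg_of_nonpos (le_of_lt hε) h
    · rename_i h; push_neg at h; nlinarith
  have hz := hfeas c hcabs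
  have hzsum : ∑ f, (y f + c * d f) = s := by
    rw [Finset.sum_add_distrib, hysum, ← Finset.mul_sum, hsumd]; ring
  have hzP2 : (fun f => y f + c * d f) ∈ P2 := ⟨hz, hzsum⟩
  have hd2pos : 0 < ∑ f, d f ^ 2 := by
    have hne' : d ≠ 0 := hd0
    have : ∃ f, d f ≠ 0 := by
      by_contra hall
      push_neg at hall
      exact hne' (funext hall)
    obtain ⟨f₁, hf₁⟩ := this
    refine Finset.sum_pos' (fun f _ => sq_nonneg _) ⟨f₁, Finset.mem_univ f₁, ?_⟩
    positivity
  have hΦz : ∑ f, (y f + c * d f) * (1 - (y f + c * d f))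
      = (∑ f, y f * (1 - y f)) + c * Lns - c ^ 2 * ∑ f, d f ^ 2 := by
    rw [hLns, Finset.mul_sum, Finset.mul_sum]
    rw [show ((∑ f, y f * (1 - y f)) + ∑ f, c * (d f * (1 - 2 * y f)))
        - ∑ f, c ^ 2 * d f ^ 2
        = (∑ f, y f * (1 - y f)) + ((∑ f, c * (d f * (1 - 2 * y f)))
          - ∑ f, c ^ 2 * d f ^ 2) by ring]
    rw [← Finset.sum_sub_distrib, ← Finset.sum_add_distrib]
    refine Finset.sum_congr rfl (fun f _ => ?_)
    ring
  have hmin := hymin hzP2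
  rw [Set.mem_setOf_eq] at hmin
  have : (∑ f, y f * (1 - y f)) ≤ (∑ f, y f * (1 - y f)) + c * Lns - c ^ 2 * ∑ f, d f ^ 2 := by
    calc (∑ f, y f * (1 - y f)) ≤ _ := hmin
    _ = _ := hΦz
  nlinarith [sq_nonneg ε, mul_pos (mul_pos hε hε) hd2pos]

lemma sum_prod_bool (y : E × Bool → ℝ) :
    ∑ f : E × Bool, y f = ∑ e : E, (y (e, false) + y (e, true)) := by
  rw [Fintype.sum_prod_type]
  refine Finset.sum_congr rfl (fun e _ => ?_)
  rw [Fintype.sum_bool]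
  ring

lemma exists_rounding (hne : ∀ e, es e ≠ et e) (N : E → ℝ) (hN : IsFrac es et N) :
    ∃ M : E → ℝ, IsHalf es et M ∧ (∀ e, 0 < M e → 0 < N e) ∧
      (∀ v, degSum es et N v = 1 → degSum es et M v = 1) ∧ size N ≤ size M := by
  classical
  obtain ⟨y, hyP, hy01, hymax⟩ := exists_integral_max es et hne N hN.1 hN.2
  set M : E → ℝ := fun e => (y (e, false) + y (e, true)) / 2 with hM
  have hdeg : ∀ v, degSum es et M v = (dL es et y v + dR es et y v) / 2 := by
    intro v
    rw [dL_add_dR es et hne]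
    unfold degSum
    rw [Finset.sum_div]
  refine ⟨M, ⟨⟨fun e => by
    have := hyP.1 (e, false); have := hyP.1 (e, true)
    rw [hM]; dsimp only; linarith, fun v => ?_⟩, fun e => ?_⟩, fun e hMe => ?_,
    fun v hv => ?_, ?_⟩
  · rw [hdeg]
    have := hyP.2.2.1 v
    have := hyP.2.2.2.1 v
    linarith
  · rcases hy01 (e, false) with h1 | h1 <;> rcases hy01 (e, true) with h2 | h2 <;>
      simp [hM, h1, h2] <;> norm_num
  · by_contra hN0
    push_neg at hN0
    have hNe : N e = 0 := le_antisymm hN0 (hN.1 e)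
    have h1 := hyP.2.1 (e, false) hNe
    have h2 := hyP.2.1 (e, true) hNe
    rw [hM] at hMe
    simp only [h1, h2] at hMe
    norm_num at hMe
  · rw [hdeg, (hyP.2.2.2.2 v hv).1, (hyP.2.2.2.2 v hv).2]
    norm_num
  · have hy0 := hymax (fun f => N f.1) (y0_feas es et hne N hN.1 hN.2)
    rw [sum_prod_bool, sum_prod_bool] at hy0
    unfold size
    have : ∑ e, M e = (∑ e, (y (e, false) + y (e, true))) / 2 := by
      rw [Finset.sum_div]
    rw [this]
    have h2 : ∑ e : E, (N e + N e) = 2 * ∑ e, N e := by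
      rw [Finset.sum_add_distrib]; ring
    rw [h2] at hy0
    linarith

end Rounding

section Tan
variable (es et : E → V) {R : Type*} [LinearOrder R] (rk : V → E → R)

/-- the other endpoint -/
def oth (v : V) (e : E) : V := if es e = v then et e else es e

/-- edges of the table `T` at `v` -/
def Tv (T : Finset E) (v : V) : Finset E := T.filter (fun e => es e = v ∨ et e = v)

def IsTop (T : Finset E) (v : V) (t : E) : Prop :=
  t ∈ Tv es et T v ∧ ∀ f ∈ Tv es et T v, rk v f ≤ rk v t

def IsBot (T : Finset E) (v : V) (b : E) : Prop :=
  b ∈ Tv es et T v ∧ ∀ f ∈ Tv es et T v, rk v b ≤ rk v f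

def Degen (T : Finset E) : Prop :=
  ∀ u t, IsTop es et rk T u t → IsBot es et rk T (oth es et u t) t

def Cov (T : Finset E) (v : V) (e : E) : Prop :=
  ∃ b, IsBot es et rk T v b ∧ IsTop es et rk T (oth es et v b) b ∧ rk v e < rk v b

def INV (E₀ T : Finset E) : Prop :=
  ∀ e ∈ E₀, e ∉ T → Cov es et rk T (es e) e ∨ Cov es et rk T (et e) e

lemma mem_Tv {T : Finset E} {v : V} {e : E} :
    e ∈ Tv es et T v ↔ e ∈ T ∧ (es e = v ∨ et e = v) := by
  simp [Tv]

lemma mem_Tv_incident {T : Finset E} {v : V} {e : E} (h : e ∈ Tv es et T v) :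
    es e = v ∨ et e = v := ((mem_Tv es et).mp h).2

lemma oth_spec {v : V} {e : E} (h : es e = v ∨ et e = v) :
    (es e = v ∧ oth es et v e = et e) ∨ (et e = v ∧ oth es et v e = es e) := by
  unfold oth
  by_cases h1 : es e = v
  · exact Or.inl ⟨h1, if_pos h1⟩
  · rcases h with h | h
    · exact absurd h h1
    · exact Or.inr ⟨h, if_neg h1⟩

lemma oth_incident {v : V} {e : E} (h : es e = v ∨ et e = v) :
    es e = oth es et v e ∨ et e = oth es et v e := by
  rcases oth_spec es et h with ⟨_, h2⟩ | ⟨_, h2⟩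
  · exact Or.inr h2.symm
  · exact Or.inl h2.symm

lemma oth_ne (hne : ∀ e, es e ≠ et e) {v : V} {e : E} (h : es e = v ∨ et e = v) :
    oth es et v e ≠ v := by
  rcases oth_spec es et h with ⟨h1, h2⟩ | ⟨h1, h2⟩
  · rw [h2, ← h1]; exact (hne e).symm
  · rw [h2, ← h1]; exact hne e

lemma oth_oth (hne : ∀ e, es e ≠ et e) {v : V} {e : E} (h : es e = v ∨ et e = v) :
    oth es et (oth es et v e) e = v := by
  rcases oth_spec es et h with ⟨h1, h2⟩ | ⟨h1, h2⟩
  · rw [h2]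
    unfold oth
    rw [if_neg (hne e), h1]
  · rw [h2]
    unfold oth
    rw [if_pos rfl, h1]

lemma mem_Tv_oth {T : Finset E} {v : V} {e : E} (h : e ∈ Tv es et T v) :
    e ∈ Tv es et T (oth es et v e) := by
  rw [mem_Tv] at h ⊢
  exact ⟨h.1, oth_incident es et h.2⟩

lemma top_unique (hinj : ∀ v e f, rk v e = rk v f → e = f) {T : Finset E} {v : V} {t t' : E}
    (h : IsTop es et rk T v t) (h' : IsTop es et rk T v t') : t = t' :=
  hinj v t t' (le_antisymm (h'.2 t h.1) (h.2 t' h'.1))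

lemma bot_unique (hinj : ∀ v e f, rk v e = rk v f → e = f) {T : Finset E} {v : V} {b b' : E}
    (h : IsBot es et rk T v b) (h' : IsBot es et rk T v b') : b = b' :=
  hinj v b b' (le_antisymm (h.2 b' h'.1) (h'.2 b h.1))

lemma exists_top {T : Finset E} {v : V} (h : (Tv es et T v).Nonempty) :
    ∃ t, IsTop es et rk T v t := by
  obtain ⟨t, ht, hmax⟩ := Finset.exists_max_image (Tv es et T v) (rk v) h
  exact ⟨t, ht, hmax⟩

lemma exists_bot {T : Finset E} {v : V} (h : (Tv es et T v).Nonempty) :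
    ∃ b, IsBot es et rk T v b := by
  obtain ⟨b, hb, hmin⟩ := Finset.exists_min_image (Tv es et T v) (rk v) h
  exact ⟨b, hb, hmin⟩

lemma top_subset {T' T : Finset E} {v : V} {t : E} (hsub : T' ⊆ T)
    (ht : IsTop es et rk T v t) (hmem : t ∈ T') : IsTop es et rk T' v t := by
  refine ⟨(mem_Tv es et).mpr ⟨hmem, (mem_Tv_incident es et ht.1)⟩, fun f hf => ?_⟩
  exact ht.2 f ((mem_Tv es et).mpr ⟨hsub ((mem_Tv es et).mp hf).1, ((mem_Tv es et).mp hf).2⟩)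

lemma bot_subset {T' T : Finset E} {v : V} {b : E} (hsub : T' ⊆ T)
    (hb : IsBot es et rk T v b) (hmem : b ∈ T') : IsBot es et rk T' v b := by
  refine ⟨(mem_Tv es et).mpr ⟨hmem, (mem_Tv_incident es et hb.1)⟩, fun f hf => ?_⟩
  exact hb.2 f ((mem_Tv es et).mpr ⟨hsub ((mem_Tv es et).mp hf).1, ((mem_Tv es et).mp hf).2⟩)

/-- Phase 1 step -/
lemma stepA (hne : ∀ e, es e ≠ et e) {E₀ T : Finset E}
    (hINV : INV es et rk E₀ T) {u : V} {t f : E}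
    (ht : IsTop es et rk T u t) (hf : f ∈ Tv es et T (oth es et u t))
    (hflt : rk (oth es et u t) f < rk (oth es et u t) t) :
    ∃ T' : Finset E, T' ⊆ T ∧ T'.card < T.card ∧ INV es et rk E₀ T' := by
  classical
  set v : V := oth es et u t with hv
  set D : Finset E := (Tv es et T v).filter (fun g => rk v g < rk v t) with hD
  have hDT : D ⊆ T := fun g hg => ((mem_Tv es et).mp (Finset.mem_filter.mp hg).1).1
  have htinc : es t = v ∨ et t = v := by
    rw [hv]
    exact oth_incident es et (mem_Tv_incident es et ht.1)
  have htTv : t ∈ Tv es et T v := by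
    rw [hv]; exact mem_Tv_oth es et ht.1
  have htD : t ∉ D := by
    rw [hD]
    intro hc
    exact absurd (Finset.mem_filter.mp hc).2 (lt_irrefl _)
  set T' : Finset E := T \ D with hT'
  have hsub : T' ⊆ T := Finset.sdiff_subset
  have hcard : T'.card < T.card := by
    refine Finset.card_lt_card ?_
    rw [hT']
    refine ⟨Finset.sdiff_subset, fun hTT' => ?_⟩
    have hfD : f ∈ D := Finset.mem_filter.mpr ⟨hf, hflt⟩
    have : f ∈ T \ D := hTT' (hDT hfD)
    exact (Finset.mem_sdiff.mp this).2 hfD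
  -- new top/bot structure
  have htT' : t ∈ T' := Finset.mem_sdiff.mpr ⟨(mem_Tv es et).mp htTv |>.1, htD⟩
  have htopT' : IsTop es et rk T' u t := top_subset es et rk hsub ht htT'
  have hbotT' : IsBot es et rk T' v t := by
    refine ⟨(mem_Tv es et).mpr ⟨htT', htinc⟩, fun g hg => ?_⟩
    have hg' := (mem_Tv es et).mp hg
    have hgD : g ∉ D := (Finset.mem_sdiff.mp hg'.1).2
    have hgTv : g ∈ Tv es et T v :=
      (mem_Tv es et).mpr ⟨(Finset.mem_sdiff.mp hg'.1).1, hg'.2⟩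
    by_contra hlt
    push_neg at hlt
    exact hgD (Finset.mem_filter.mpr ⟨hgTv, hlt⟩)
  have hothvt : oth es et v t = u := by
    rw [hv]; exact oth_oth es et hne (mem_Tv_incident es et ht.1)
  refine ⟨T', hsub, hcard, ?_⟩
  intro e he heT'
  have hcove : Cov es et rk T' v e → (Cov es et rk T' (es e) e ∨ Cov es et rk T' (et e) e) → True := fun _ _ => trivial
  by_cases heD : e ∈ D
  · -- newly deleted edges, covered at v by t
    have hcov : Cov es et rk T' v e :=
      ⟨t, hbotT', by rw [hothvt]; exact htopT', (Finset.mem_filter.mp heD).2⟩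
    have hinc : es e = v ∨ et e = v := mem_Tv_incident es et (Finset.mem_filter.mp heD).1
    rcases hinc with h | h
    · exact Or.inl (h ▸ hcov)
    · exact Or.inr (h ▸ hcov)
  · -- previously deleted edges
    have heT : e ∉ T := by
      intro hc
      exact heT' (Finset.mem_sdiff.mpr ⟨hc, heD⟩)
    have hstep : ∀ w, Cov es et rk T w e → Cov es et rk T' w e := by
      intro w ⟨b, hbot, htop', hlt⟩
      set u' : V := oth es et w b with hu'
      by_cases hbD : b ∈ D
      · have hbd := Finset.mem_filter.mp hbD
        have hbv : es b = v ∨ et b = v := mem_Tv_incident es et hbd.1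
        have hbw : es b = w ∨ et b = w := mem_Tv_incident es et hbot.1
        have hvw : v = w ∨ v = u' := by
          rcases oth_spec es et hbw with ⟨h1, h2⟩ | ⟨h1, h2⟩ <;> rcases hbv with h3 | h3
          · exact Or.inl (h3 ▸ h1)
          · right; rw [hu', h2, h3]
          · right; rw [hu', h2, h3]
          · exact Or.inl (h3 ▸ h1)
        rcases hvw with hvw | hvw
        · -- the deleting vertex is w itself; use the new bottom t
          refine ⟨t, hvw ▸ hbotT', ?_, ?_⟩
          · rw [← hvw, hothvt]; exact htopT'
          · have h1 : rk w e < rk w b := hlt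
            have h2 : rk v b < rk v t := hbd.2
            rw [← hvw]
            rw [← hvw] at h1
            exact h1.trans h2
        · -- impossible: b is the top of u' but dominated
          exfalso
          have h2 : rk v b < rk v t := hbd.2
          have h3 : t ∈ Tv es et T u' := hvw ▸ htTv
          have h4 := htop'.2 t h3
          rw [← hvw] at h4
          exact absurd h2 (not_lt.mpr h4)
      · -- b survives, old covering persists
        have hbT' : b ∈ T' := Finset.mem_sdiff.mpr ⟨((mem_Tv es et).mp hbot.1).1, hbD⟩
        exact ⟨b, bot_subset es et rk hsub hbot hbT', top_subset es et rk hsub htop' hbT', hlt⟩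
    rcases hINV e he heT with h | h
    · exact Or.inl (hstep (es e) h)
    · exact Or.inr (hstep (et e) h)

lemma degen_of_no_step {T : Finset E}
    (h : ∀ u t, IsTop es et rk T u t →
      ∀ f ∈ Tv es et T (oth es et u t), ¬ rk (oth es et u t) f < rk (oth es et u t) t) :
    Degen es et rk T := by
  intro u t ht
  exact ⟨mem_Tv_oth es et ht.1, fun f hf => not_lt.mp (h u t ht f hf)⟩

lemma next_inj (hne : ∀ e, es e ≠ et e) (hinj : ∀ v e f, rk v e = rk v f → e = f)
    {T : Finset E} (hdeg : Degen es et rk T) {u₁ u₂ : V} {t₁ t₂ : E}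
    (h₁ : IsTop es et rk T u₁ t₁) (h₂ : IsTop es et rk T u₂ t₂)
    (heq : oth es et u₁ t₁ = oth es et u₂ t₂) : u₁ = u₂ ∧ t₁ = t₂ := by
  have hb₁ := hdeg u₁ t₁ h₁
  have hb₂ := hdeg u₂ t₂ h₂
  rw [heq] at hb₁
  have hteq : t₁ = t₂ := bot_unique es et rk hinj hb₁ hb₂
  refine ⟨?_, hteq⟩
  have e₁ : oth es et (oth es et u₁ t₁) t₁ = u₁ := oth_oth es et hne (mem_Tv_incident es et h₁.1)
  have e₂ : oth es et (oth es et u₂ t₂) t₂ = u₂ := oth_oth es et hne (mem_Tv_incident es et h₂.1)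
  rw [← e₁, ← e₂, heq, hteq]

/-- every occupied vertex is the target of somebody's top edge (counting). -/
lemma next_surj (hne : ∀ e, es e ≠ et e) (hinj : ∀ v e f, rk v e = rk v f → e = f)
    {T : Finset E} (hdeg : Degen es et rk T) {w : V} (hw : (Tv es et T w).Nonempty) :
    ∃ u t, IsTop es et rk T u t ∧ oth es et u t = w := by
  classical
  set W : Finset V := univ.filter (fun v => (Tv es et T v).Nonempty) with hW
  have hmemW : ∀ v, v ∈ W ↔ (Tv es et T v).Nonempty := by
    intro v; simp [hW]
  -- choice of top for each occupied vertex
  have htopf : ∀ v ∈ W, ∃ t, IsTop es et rk T v t := by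
    intro v hv; exact exists_top es et rk ((hmemW v).mp hv)
  set tf : ∀ v ∈ W, E := fun v hv => (htopf v hv).choose with htf
  have htfspec : ∀ v hv, IsTop es et rk T v (tf v hv) := fun v hv => (htopf v hv).choose_spec
  set nf : ∀ v ∈ W, V := fun v hv => oth es et v (tf v hv) with hnf
  have hnfW : ∀ v hv, nf v hv ∈ W := by
    intro v hv
    rw [hmemW]
    exact ⟨tf v hv, mem_Tv_oth es et (htfspec v hv).1⟩
  have hinjW : ∀ v₁ v₂ (hv₁ : v₁ ∈ W) (hv₂ : v₂ ∈ W), nf v₁ hv₁ = nf v₂ hv₂ → v₁ = v₂ := by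
    intro v₁ v₂ hv₁ hv₂ heq
    exact (next_inj es et rk hne hinj hdeg (htfspec v₁ hv₁) (htfspec v₂ hv₂) heq).1
  have hsurj := Finset.surj_on_of_inj_on_of_card_le (s := W) (t := W) nf hnfW hinjW le_rfl
  obtain ⟨u, hu, huw⟩ := hsurj w ((hmemW w).mpr hw)
  exact ⟨u, tf u hu, htfspec u hu, huw.symm⟩

/-- a bottom edge is the top edge of its other endpoint (in a degenerate table). -/
lemma bot_top (hne : ∀ e, es e ≠ et e) (hinj : ∀ v e f, rk v e = rk v f → e = f)
    {T : Finset E} (hdeg : Degen es et rk T) {w : V} {b : E}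
    (hb : IsBot es et rk T w b) : IsTop es et rk T (oth es et w b) b := by
  obtain ⟨u, t, htop, hw⟩ := next_surj es et rk hne hinj hdeg ⟨b, hb.1⟩
  have hbt : t = b := bot_unique es et rk hinj (hw ▸ hdeg u t htop) hb
  have hu : oth es et w b = u := by
    rw [← hbt, ← hw, oth_oth es et hne (mem_Tv_incident es et htop.1)]
  rw [hu, ← hbt]
  exact htop

/-- existence of a second-best edge. -/
lemma exists_second (hinj : ∀ v e f, rk v e = rk v f → e = f) {T : Finset E} {v : V}
    (h2 : 2 ≤ (Tv es et T v).card) :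
    ∃ t s, IsTop es et rk T v t ∧ s ∈ Tv es et T v ∧ s ≠ t ∧
      ∀ f ∈ Tv es et T v, f ≠ t → rk v f ≤ rk v s := by
  obtain ⟨t, ht⟩ := exists_top es et rk (Finset.card_pos.mp (by omega : 0 < (Tv es et T v).card))
  have herase : ((Tv es et T v).erase t).Nonempty := by
    rw [← Finset.card_pos, Finset.card_erase_of_mem ht.1]
    omega
  obtain ⟨s, hs, hsmax⟩ := Finset.exists_max_image _ (rk v) herase
  refine ⟨t, s, ht, Finset.mem_of_mem_erase hs, Finset.ne_of_mem_erase hs, fun f hf hft => ?_⟩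
  exact hsmax f (Finset.mem_erase.mpr ⟨hft, hf⟩)

/-- chain step: from a vertex with ≥ 2 table edges, the canonical walk reaches
another vertex with ≥ 2 table edges. -/
lemma chain_step (hne : ∀ e, es e ≠ et e) (hinj : ∀ v e f, rk v e = rk v f → e = f)
    {T : Finset E} (hdeg : Degen es et rk T) {x : V} {t s : E}
    (ht : IsTop es et rk T x t) (hs : s ∈ Tv es et T x) (hst : s ≠ t)
    {b : E} (hb : IsBot es et rk T (oth es et x s) b) :
    IsTop es et rk T (oth es et (oth es et x s) b) b ∧
      2 ≤ (Tv es et T (oth es et (oth es et x s) b)).card := by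
  set y : V := oth es et x s with hy
  set z : V := oth es et y b with hz
  have hbz : IsTop es et rk T z b := bot_top es et rk hne hinj hdeg hb
  refine ⟨hbz, ?_⟩
  by_contra hlt
  push_neg at hlt
  -- then Tv z = {b}, so b is also the bottom of z
  have hTz : Tv es et T z = {b} := by
    refine Finset.eq_singleton_iff_unique_mem.mpr ⟨hbz.1, fun f hf => ?_⟩
    by_contra hfb
    have : 2 ≤ (Tv es et T z).card := by
      have : ({f, b} : Finset E) ⊆ Tv es et T z := by
        intro g hg
        rcases Finset.mem_insert.mp hg with h | h
        · exact h ▸ hf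
        · exact (Finset.mem_singleton.mp h) ▸ hbz.1
      calc 2 = ({f, b} : Finset E).card := (Finset.card_pair hfb).symm
      _ ≤ _ := Finset.card_le_card this
    omega
  have hbotz : IsBot es et rk T z b := by
    refine ⟨hbz.1, fun f hf => ?_⟩
    rw [hTz, Finset.mem_singleton] at hf
    rw [hf]
  -- then b is the top of y, hence y's list is {b} and s = b, so z = x
  have hothzb : oth es et z b = y := by
    rw [hz]; exact oth_oth es et hne (mem_Tv_incident es et hb.1)
  have htopy : IsTop es et rk T y b := by
    have := bot_top es et rk hne hinj hdeg hbotz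
    rwa [hothzb] at this
  have hboty : IsBot es et rk T y b := hb
  have hTy : ∀ f ∈ Tv es et T y, f = b := by
    intro f hf
    exact hinj y f b (le_antisymm (htopy.2 f hf) (hboty.2 f hf))
  have hsy : s ∈ Tv es et T y := by
    rw [hy]; exact mem_Tv_oth es et hs
  have hsb : s = b := hTy s hsy
  have hzx : z = x := by
    rw [hz, ← hsb, hy]
    exact oth_oth es et hne (mem_Tv_incident es et hs)
  -- but x has at least two table edges t ≠ s
  have : 2 ≤ (Tv es et T z).card := by
    rw [hzx]
    have : ({s, t} : Finset E) ⊆ Tv es et T x := by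
      intro g hg
      rcases Finset.mem_insert.mp hg with h | h
      · exact h ▸ hs
      · exact (Finset.mem_singleton.mp h) ▸ ht.1
    calc 2 = ({s, t} : Finset E).card := (Finset.card_pair hst).symm
    _ ≤ _ := Finset.card_le_card this
  omega

/-- helper: the endpoints of an edge at `v` are `v` and `oth v e`. -/
lemma endpoint_cases {v w : V} {e : E} (hv : es e = v ∨ et e = v)
    (hw : es e = w ∨ et e = w) : w = v ∨ w = oth es et v e := by
  rcases oth_spec es et hv with ⟨h1, h2⟩ | ⟨h1, h2⟩ <;> rcases hw with h3 | h3
  · exact Or.inl (h3 ▸ h1)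
  · right; rw [h2, ← h3]
  · right; rw [h2, ← h3]
  · exact Or.inl (h3 ▸ h1)

/-- helper: a vertex whose second-best edge is its bottom has exactly two table edges. -/
lemma card_two_of_sec_bot (hinj : ∀ v e f, rk v e = rk v f → e = f) {T : Finset E} {v : V}
    {t s : E} (ht : IsTop es et rk T v t) (hs : s ∈ Tv es et T v) (hst : s ≠ t)
    (hsec : ∀ f ∈ Tv es et T v, f ≠ t → rk v f ≤ rk v s)
    (hb : IsBot es et rk T v s) : (Tv es et T v).card = 2 := by
  have hsub : Tv es et T v ⊆ {t, s} := by
    intro f hf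
    by_cases hft : f = t
    · exact Finset.mem_insert.mpr (Or.inl hft)
    · have h1 := hsec f hf hft
      have h2 := hb.2 f hf
      have : f = s := hinj v f s (le_antisymm h1 h2)
      exact Finset.mem_insert.mpr (Or.inr (Finset.mem_singleton.mpr this))
  have h1 : (Tv es et T v).card ≤ 2 := by
    calc (Tv es et T v).card ≤ ({t, s} : Finset E).card := Finset.card_le_card hsub
    _ ≤ 2 := Finset.card_insert_le _ _ |>.trans (by simp)
  have h2 : 2 ≤ (Tv es et T v).card := by
    have : ({s, t} : Finset E) ⊆ Tv es et T v := by
      intro g hg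
      rcases Finset.mem_insert.mp hg with h | h
      · exact h ▸ hs
      · exact (Finset.mem_singleton.mp h) ▸ ht.1
    calc 2 = ({s, t} : Finset E).card := (Finset.card_pair hst).symm
    _ ≤ _ := Finset.card_le_card this
  omega

/-- Rotation elimination step. -/
lemma stepRot (hne : ∀ e, es e ≠ et e) (hinj : ∀ v e f, rk v e = rk v f → e = f)
    {E₀ T : Finset E} (hINV : INV es et rk E₀ T) (hdeg : Degen es et rk T)
    {x₀ : V} (hx₀ : 3 ≤ (Tv es et T x₀).card) :
    ∃ T' : Finset E, T' ⊆ T ∧ T'.card < T.card ∧ INV es et rk E₀ T' := by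
  classical
  set Sub := {x : V // 2 ≤ (Tv es et T x).card} with hSub
  -- canonical data
  have hdata : ∀ x : Sub, ∃ p : E × E, IsTop es et rk T (x : V) p.1 ∧
      p.2 ∈ Tv es et T (x : V) ∧ p.2 ≠ p.1 ∧
      ∀ f ∈ Tv es et T (x : V), f ≠ p.1 → rk (x : V) f ≤ rk (x : V) p.2 := by
    intro x
    obtain ⟨t, s, h1, h2, h3, h4⟩ := exists_second es et rk hinj x.2
    exact ⟨(t, s), h1, h2, h3, h4⟩
  set tE : Sub → E := fun x => (hdata x).choose.1 with htE
  set sE : Sub → E := fun x => (hdata x).choose.2 with hsE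
  have htop : ∀ x : Sub, IsTop es et rk T (x : V) (tE x) := fun x => (hdata x).choose_spec.1
  have hsmem : ∀ x : Sub, sE x ∈ Tv es et T (x : V) := fun x => (hdata x).choose_spec.2.1
  have hst : ∀ x : Sub, sE x ≠ tE x := fun x => (hdata x).choose_spec.2.2.1
  have hsec : ∀ x : Sub, ∀ f ∈ Tv es et T (x : V), f ≠ tE x →
      rk (x : V) f ≤ rk (x : V) (sE x) := fun x => (hdata x).choose_spec.2.2.2
  set yv : Sub → V := fun x => oth es et (x : V) (sE x) with hyv
  have hsmemy : ∀ x : Sub, sE x ∈ Tv es et T (yv x) := fun x => mem_Tv_oth es et (hsmem x)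
  have hyNE : ∀ x : Sub, (Tv es et T (yv x)).Nonempty := fun x => ⟨sE x, hsmemy x⟩
  have hbdata : ∀ x : Sub, ∃ b, IsBot es et rk T (yv x) b := fun x =>
    exists_bot es et rk (hyNE x)
  set bE : Sub → E := fun x => (hbdata x).choose with hbE
  have hbot : ∀ x : Sub, IsBot es et rk T (yv x) (bE x) := fun x => (hbdata x).choose_spec
  set zv : Sub → V := fun x => oth es et (yv x) (bE x) with hzv
  have hchain : ∀ x : Sub, IsTop es et rk T (zv x) (bE x) ∧
      2 ≤ (Tv es et T (zv x)).card := fun x =>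
    chain_step es et rk hne hinj hdeg (htop x) (hsmem x) (hst x) (hbot x)
  set G : Sub → Sub := fun x => ⟨zv x, (hchain x).2⟩ with hG
  -- total next function
  set nxt : V → V := fun v => if h : (Tv es et T v).Nonempty
    then oth es et v (exists_top es et rk h).choose else v with hnxt
  have hnxtspec : ∀ (v : V) (h : (Tv es et T v).Nonempty),
      ∀ t, IsTop es et rk T v t → nxt v = oth es et v t := by
    intro v h t ht
    rw [hnxt]
    simp only [dif_pos h]
    rw [top_unique es et rk hinj (exists_top es et rk h).choose_spec ht]
  have hN1 : ∀ x : Sub, yv x = nxt (zv x) := by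
    intro x
    have hNE : (Tv es et T (zv x)).Nonempty := Finset.card_pos.mp (by have := (hchain x).2; omega)
    rw [hnxtspec (zv x) hNE (bE x) (hchain x).1]
    rw [hzv]
    exact (oth_oth es et hne (mem_Tv_incident es et (hbot x).1)).symm
  have hN2 : ∀ v₁ v₂ : V, (Tv es et T v₁).Nonempty → (Tv es et T v₂).Nonempty →
      nxt v₁ = nxt v₂ → v₁ = v₂ := by
    intro v₁ v₂ h₁ h₂ heq
    have e₁ := hnxtspec v₁ h₁ _ (exists_top es et rk h₁).choose_spec
    have e₂ := hnxtspec v₂ h₂ _ (exists_top es et rk h₂).choose_spec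
    rw [e₁, e₂] at heq
    exact (next_inj es et rk hne hinj hdeg (exists_top es et rk h₁).choose_spec
      (exists_top es et rk h₂).choose_spec heq).1
  -- the chain sequence and its cycle
  set x₀s : Sub := ⟨x₀, by omega⟩ with hx₀s
  set seq : ℕ → Sub := fun k => G^[k] x₀s with hseq
  have hstepSeq : ∀ m, G (seq m) = seq (m + 1) := by
    intro m
    rw [hseq]
    simp only
    rw [Function.iterate_succ_apply']
  have : Finite Sub := Subtype.finite
  obtain ⟨i', j', hne', heq'⟩ := Finite.exists_ne_map_eq_of_infinite seq
  have hij : ∃ i j, i < j ∧ seq i = seq j := by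
    rcases lt_or_gt_of_ne hne' with h | h
    · exact ⟨i', j', h, heq'⟩
    · exact ⟨j', i', h, heq'.symm⟩
  obtain ⟨i, j, hij, hseqeq⟩ := hij
  set Rc : Finset Sub := (Finset.Ico i j).image seq with hRc
  have hRcl : ∀ a ∈ Rc, G a ∈ Rc := by
    intro a ha
    obtain ⟨k, hk, hka⟩ := Finset.mem_image.mp ha
    rw [Finset.mem_Ico] at hk
    rw [← hka]
    rw [hstepSeq k]
    by_cases hkj : k + 1 < j
    · exact Finset.mem_image.mpr ⟨k + 1, Finset.mem_Ico.mpr ⟨by omega, hkj⟩, rfl⟩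
    · have : k + 1 = j := by omega
      rw [this, ← hseqeq]
      exact Finset.mem_image.mpr ⟨i, Finset.mem_Ico.mpr ⟨le_rfl, hij⟩, rfl⟩
  have hRsurj : ∀ b ∈ Rc, ∃ a, ∃ _ : a ∈ Rc, G a = b := by
    intro b hb
    obtain ⟨k, hk, hkb⟩ := Finset.mem_image.mp hb
    rw [Finset.mem_Ico] at hk
    by_cases hki : k = i
    · refine ⟨seq (j - 1), ⟨Finset.mem_image.mpr ⟨j - 1,
        Finset.mem_Ico.mpr ⟨by omega, by omega⟩, rfl⟩, ?_⟩⟩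
      rw [hstepSeq (j - 1), show j - 1 + 1 = j by omega, ← hseqeq, ← hkb, hki]
    · refine ⟨seq (k - 1), ⟨Finset.mem_image.mpr ⟨k - 1,
        Finset.mem_Ico.mpr ⟨by omega, by omega⟩, rfl⟩, ?_⟩⟩
      rw [hstepSeq (k - 1), show k - 1 + 1 = k by omega, ← hkb]
  have hRinj : ∀ a₁ ∈ Rc, ∀ a₂ ∈ Rc, G a₁ = G a₂ → a₁ = a₂ := by
    have h := Finset.inj_on_of_surj_on_of_card_le (s := Rc) (t := Rc)
      (fun a _ => G a) (fun a ha => hRcl a ha)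
      (fun b hb => by
        obtain ⟨a, ha, hGa⟩ := hRsurj b hb
        exact ⟨a, ha, hGa⟩) le_rfl
    intro a₁ h₁ a₂ h₂ heq
    exact h h₁ h₂ heq
  have hRne : Rc.Nonempty := ⟨seq i, Finset.mem_image.mpr ⟨i,
    Finset.mem_Ico.mpr ⟨le_rfl, hij⟩, rfl⟩⟩
  -- the forbidden set S
  set S : Set V := {v | ∀ k : ℕ, (Tv es et T (nxt^[k] v)).card ≤ 2} with hS
  have hS1 : ∀ v ∈ S, nxt v ∈ S := by
    intro v hv k
    rw [← Function.iterate_succ_apply]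
    exact hv (k + 1)
  have hS2 : ∀ x : Sub, (zv x : V) ∈ S → (x : V) ∈ S := by
    intro x hz
    have hy : (Tv es et T (yv x)).card ≤ 2 := by
      have := hz 1
      rwa [Function.iterate_one, ← hN1 x] at this
    obtain ⟨ty, hty⟩ := exists_top es et rk (hyNE x)
    have hcases : sE x = bE x ∨ sE x = ty := by
      by_contra hc
      push_neg at hc
      by_cases htb : ty = bE x
      · -- top = bot at y forces all edges equal
        have : sE x = bE x := hinj (yv x) _ _
          (le_antisymm ((htb ▸ hty).2 _ (hsmemy x)) ((hbot x).2 _ (hsmemy x)))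
        exact hc.1 this
      · have hsub3 : ({sE x, ty, bE x} : Finset E) ⊆ Tv es et T (yv x) := by
          intro g hg
          rcases Finset.mem_insert.mp hg with h | h
          · exact h ▸ hsmemy x
          rcases Finset.mem_insert.mp h with h | h
          · exact h ▸ hty.1
          · exact (Finset.mem_singleton.mp h) ▸ (hbot x).1
        have hcard3 : ({sE x, ty, bE x} : Finset E).card = 3 := by
          rw [Finset.card_insert_of_notMem, Finset.card_insert_of_notMem,
            Finset.card_singleton]
          · simp [htb]
          · simp [hc.1, hc.2]
        have := Finset.card_le_card hsub3
        omega
    rcases hcases with h | h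
    · have : zv x = (x : V) := by
        show oth es et (yv x) (bE x) = (x : V)
        rw [← h]
        show oth es et (oth es et (x : V) (sE x)) (sE x) = (x : V)
        exact oth_oth es et hne (mem_Tv_incident es et (hsmem x))
      rwa [← this]
    · have h1 : (x : V) = nxt (yv x) := by
        rw [hnxtspec (yv x) (hyNE x) ty hty, ← h, hyv]
        exact (oth_oth es et hne (mem_Tv_incident es et (hsmem x))).symm
      rw [h1, hN1 x]
      exact hS1 _ (hS1 _ hz)
  have hS3 : (x₀ : V) ∉ S := by
    intro hc
    have := hc 0
    simp only [Function.iterate_zero, id] at this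
    omega
  have hS4 : ∀ k, ((seq k : Sub) : V) ∉ S := by
    intro k
    induction k with
    | zero => exact hS3
    | succ n ih =>
      intro hc
      apply ih
      have : seq (n + 1) = G (seq n) := by
        rw [hseq]; simp only; rw [Function.iterate_succ_apply']
      rw [this] at hc
      exact hS2 (seq n) hc
  have hS5 : ∀ a ∈ Rc, (a : V) ∉ S := by
    intro a ha
    obtain ⟨k, _, hka⟩ := Finset.mem_image.mp ha
    rw [← hka]
    exact hS4 k
  -- basic next-facts for chain members
  have haNE : ∀ a : Sub, (Tv es et T (a : V)).Nonempty := fun a =>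
    Finset.card_pos.mp (by have := a.2; omega)
  have hnxt_a : ∀ a : Sub, nxt (a : V) = oth es et (a : V) (tE a) := fun a =>
    hnxtspec (a : V) (haNE a) (tE a) (htop a)
  have hbot_nxt : ∀ a : Sub, IsBot es et rk T (nxt (a : V)) (tE a) := by
    intro a
    rw [hnxt_a a]
    exact hdeg (a : V) (tE a) (htop a)
  have hw_oth : ∀ w : Sub, (w : V) = oth es et (yv w) (sE w) := fun w =>
    (oth_oth es et hne (mem_Tv_incident es et (hsmem w))).symm
  -- HARM propagation
  have hprop : ∀ a b : Sub, a ∈ Rc → b ∈ Rc → (b : V) = nxt (a : V) →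
      (Tv es et T (b : V)).card = 2 →
      ∃ c : Sub, c ∈ Rc ∧ (c : V) = nxt (b : V) ∧ (Tv es et T (c : V)).card = 2 := by
    intro a b ha hb hbn hc2
    obtain ⟨w, hwR, hGw⟩ := hRsurj a ha
    have hzw : zv w = (a : V) := congrArg Subtype.val hGw
    have hyw : yv w = (b : V) := by rw [hN1 w, hzw, ← hbn]
    have hsWb : sE w ∈ Tv es et T (b : V) := hyw ▸ hsmemy w
    have hbotb : IsBot es et rk T (b : V) (tE a) := hbn ▸ hbot_nxt a
    have hbNE : (Tv es et T (b : V)).Nonempty := ⟨sE w, hsWb⟩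
    obtain ⟨τ, hτ⟩ := exists_top es et rk hbNE
    have hcases : sE w = tE a ∨ IsTop es et rk T (b : V) (sE w) := by
      by_contra hcon
      push_neg at hcon
      have hτs : sE w ≠ τ := fun h => hcon.2 (h ▸ hτ)
      by_cases hτt : τ = tE a
      · exact hcon.1 (hinj (b : V) _ _
          (le_antisymm ((hτt ▸ hτ).2 _ hsWb) (hbotb.2 _ hsWb)))
      · have hsub3 : ({sE w, τ, tE a} : Finset E) ⊆ Tv es et T (b : V) := by
          intro g hg
          rcases Finset.mem_insert.mp hg with h | h
          · exact h ▸ hsWb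
          rcases Finset.mem_insert.mp h with h | h
          · exact h ▸ hτ.1
          · exact (Finset.mem_singleton.mp h) ▸ hbotb.1
        have hcard3 : ({sE w, τ, tE a} : Finset E).card = 3 := by
          rw [Finset.card_insert_of_notMem, Finset.card_insert_of_notMem,
            Finset.card_singleton]
          · simp [hτt]
          · simp [hτs, hcon.1]
        have := Finset.card_le_card hsub3
        omega
    rcases hcases with hcase | hcase
    · exfalso
      have h1 : (w : V) = oth es et (b : V) (sE w) := by rw [← hyw]; exact hw_oth w
      have h2 : oth es et (b : V) (tE a) = (a : V) := by
        have := oth_oth es et hne (mem_Tv_incident es et (htop a).1)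
        rw [← hnxt_a a, ← hbn] at this
        exact this
      have hwa : (w : V) = (a : V) := by rw [h1, hcase, h2]
      have : w = a := Subtype.ext hwa
      exact hst w (by rw [this] at hcase ⊢; exact hcase)
    · refine ⟨w, hwR, ?_, ?_⟩
      · rw [hnxtspec (b : V) hbNE (sE w) hcase, ← hyw]
        exact hw_oth w
      · have hbotw : IsBot es et rk T (w : V) (sE w) := by
          have := hdeg (b : V) (sE w) hcase
          rwa [show oth es et (b : V) (sE w) = (w : V) by rw [← hyw]; exact (hw_oth w).symm]
            at this
        exact card_two_of_sec_bot es et rk hinj (htop w) (hsmem w) (hst w) (hsec w) hbotw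
  -- HARM impossibility
  have hK : ∀ a b : Sub, a ∈ Rc → b ∈ Rc → (b : V) = nxt (a : V) →
      (Tv es et T (b : V)).card = 2 → False := by
    intro a b ha hb hbn hc2
    have hHk : ∀ k : ℕ, ∃ pq : Sub × Sub, pq.1 ∈ Rc ∧ pq.2 ∈ Rc ∧
        ((pq.2 : V) = nxt ((pq.1 : Sub) : V)) ∧ ((pq.2 : V) = nxt^[k] (b : V)) ∧
        (Tv es et T ((pq.2 : Sub) : V)).card = 2 := by
      intro k
      induction k with
      | zero => exact ⟨(a, b), ha, hb, hbn, by simp, hc2⟩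
      | succ n ih =>
        obtain ⟨pq, h1, h2, h3, h4, h5⟩ := ih
        obtain ⟨c, hcR, hcn, hcc⟩ := hprop pq.1 pq.2 h1 h2 h3 h5
        refine ⟨(pq.2, c), h2, hcR, hcn, ?_, hcc⟩
        rw [Function.iterate_succ_apply', ← h4]
        exact hcn
    have hbS : (b : V) ∈ S := by
      intro k
      obtain ⟨pq, _, _, _, h4, h5⟩ := hHk k
      rw [← h4]
      omega
    exact hS5 b hb hbS
  -- the deleted edges
  set DelAt : Sub → Finset E := fun x =>
    (Tv es et T (yv x)).filter (fun g => rk (yv x) g < rk (yv x) (sE x)) with hDelAt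
  set DS : Finset E := Rc.biUnion DelAt with hDS
  set T' : Finset E := T \ DS with hT'
  have hsub : T' ⊆ T := Finset.sdiff_subset
  -- injectivity of the deletion sites
  have hyinj : ∀ a ∈ Rc, ∀ b ∈ Rc, yv a = yv b → a = b := by
    intro a ha b hb h
    have hzNE : ∀ x : Sub, (Tv es et T (zv x)).Nonempty := fun x =>
      Finset.card_pos.mp (by have := (hchain x).2; omega)
    rw [hN1 a, hN1 b] at h
    have := hN2 (zv a) (zv b) (hzNE a) (hzNE b) h
    exact hRinj a ha b hb (Subtype.ext this)
  -- survival of the second edges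
  have hsurv : ∀ a ∈ Rc, sE a ∉ DS := by
    intro a ha hmem
    obtain ⟨b, hbR, hdel⟩ := Finset.mem_biUnion.mp hmem
    have hdel' := Finset.mem_filter.mp hdel
    have hinc1 : es (sE a) = (a : V) ∨ et (sE a) = (a : V) :=
      mem_Tv_incident es et (hsmem a)
    have hinc2 : es (sE a) = yv b ∨ et (sE a) = yv b :=
      mem_Tv_incident es et hdel'.1
    rcases endpoint_cases es et hinc1 hinc2 with hcase | hcase
    · -- yv b = a
      have hlt : rk (a : V) (sE a) < rk (a : V) (sE b) := by
        have := hdel'.2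
        rwa [hcase] at this
      have hsEb : sE b ∈ Tv es et T (a : V) := by rw [← hcase]; exact hsmemy b
      have hsbt : sE b = tE a := by
        by_contra hne2
        exact absurd hlt (not_lt.mpr (hsec a (sE b) hsEb hne2))
      have h1 : (b : V) = oth es et (a : V) (sE b) := by
        rw [← hcase]; exact hw_oth b
      have hbn : (b : V) = nxt (a : V) := by
        rw [hnxt_a a, ← hsbt]
        exact h1
      have hbotb : IsBot es et rk T (b : V) (sE b) := by
        have := hbn ▸ hbot_nxt a
        rwa [← hsbt] at this
      exact hK a b ha hbR hbn
        (card_two_of_sec_bot es et rk hinj (htop b) (hsmem b) (hst b) (hsec b) hbotb)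
    · -- yv b = yv a
      have : yv b = yv a := by
        rw [hcase]
      have hba : b = a := hyinj b hbR a ha this
      rw [hba] at hdel'
      exact absurd hdel'.2 (lt_irrefl _)
  -- all top edges of cycle members get deleted
  have htopdel : ∀ b ∈ Rc, tE b ∈ DS := by
    intro b hb
    obtain ⟨a, haR, hGa⟩ := hRsurj b hb
    have hza : zv a = (b : V) := congrArg Subtype.val hGa
    have hbEtop : IsTop es et rk T (b : V) (bE a) := hza ▸ (hchain a).1
    have hbe : bE a = tE b := top_unique es et rk hinj hbEtop (htop b)
    have hrk : rk (yv a) (bE a) < rk (yv a) (sE a) := by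
      rcases lt_or_eq_of_le ((hbot a).2 (sE a) (hsmemy a)) with h | h
      · exact h
      · exfalso
        have hbs : bE a = sE a := hinj (yv a) _ _ h
        have hzaa : zv a = (a : V) := by
          show oth es et (yv a) (bE a) = (a : V)
          rw [hbs]
          exact (hw_oth a).symm
        have hba : b = a := Subtype.ext (by rw [← hza, hzaa])
        apply hst a
        rw [← hbs, hbe, hba]
      -- done
    refine Finset.mem_biUnion.mpr ⟨a, haR, ?_⟩
    rw [← hbe]
    exact Finset.mem_filter.mpr ⟨(hbot a).1, hrk⟩
  -- new tops and bottoms in the reduced table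
  have hmemT' : ∀ a ∈ Rc, sE a ∈ T' := by
    intro a ha
    exact Finset.mem_sdiff.mpr ⟨((mem_Tv es et).mp (hsmem a)).1, hsurv a ha⟩
  have hnewtop : ∀ b ∈ Rc, IsTop es et rk T' (b : V) (sE b) := by
    intro b hb
    refine ⟨(mem_Tv es et).mpr ⟨hmemT' b hb, mem_Tv_incident es et (hsmem b)⟩, fun f hf => ?_⟩
    have hf' := (mem_Tv es et).mp hf
    have hfT : f ∈ Tv es et T (b : V) := (mem_Tv es et).mpr ⟨hsub hf'.1, hf'.2⟩
    have hftE : f ≠ tE b := by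
      intro hc
      have : f ∉ DS := (Finset.mem_sdiff.mp hf'.1).2
      exact this (hc ▸ htopdel b hb)
    exact hsec b f hfT hftE
  have hnewbot : ∀ a ∈ Rc, IsBot es et rk T' (yv a) (sE a) := by
    intro a ha
    refine ⟨(mem_Tv es et).mpr ⟨hmemT' a ha, mem_Tv_incident es et (hsmemy a)⟩, fun f hf => ?_⟩
    have hf' := (mem_Tv es et).mp hf
    have hfT : f ∈ Tv es et T (yv a) := (mem_Tv es et).mpr ⟨hsub hf'.1, hf'.2⟩
    have hfDS : f ∉ DS := (Finset.mem_sdiff.mp hf'.1).2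
    have : f ∉ DelAt a := fun hc => hfDS (Finset.mem_biUnion.mpr ⟨a, ha, hc⟩)
    have := fun hlt => this (Finset.mem_filter.mpr ⟨hfT, hlt⟩)
    exact not_lt.mp this
  have hyoth : ∀ a : Sub, oth es et (yv a) (sE a) = (a : V) := fun a => (hw_oth a).symm
  -- cardinality decreases
  obtain ⟨b₀, hb₀⟩ := hRne
  have hcard : T'.card < T.card := by
    refine Finset.card_lt_card ?_
    refine ⟨Finset.sdiff_subset, fun hTT' => ?_⟩
    have h1 : tE b₀ ∈ T := ((mem_Tv es et).mp (htop b₀).1).1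
    have h2 := hTT' h1
    exact (Finset.mem_sdiff.mp h2).2 (htopdel b₀ hb₀)
  refine ⟨T', hsub, hcard, ?_⟩
  -- the invariant
  intro e he heT'
  by_cases heDS : e ∈ DS
  · obtain ⟨a, haR, hdel⟩ := Finset.mem_biUnion.mp heDS
    have hdel' := Finset.mem_filter.mp hdel
    have hcov : Cov es et rk T' (yv a) e :=
      ⟨sE a, hnewbot a haR, by rw [hyoth a]; exact hnewtop a haR, hdel'.2⟩
    rcases mem_Tv_incident es et hdel'.1 with h | h
    · exact Or.inl (h ▸ hcov)
    · exact Or.inr (h ▸ hcov)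
  · have heT : e ∉ T := fun hc => heT' (Finset.mem_sdiff.mpr ⟨hc, heDS⟩)
    have hpersist : ∀ w, Cov es et rk T w e → Cov es et rk T' w e := by
      intro w ⟨b, hbotw, htopw, hlt⟩
      by_cases hbDS : b ∈ DS
      · obtain ⟨a, haR, hdel⟩ := Finset.mem_biUnion.mp hbDS
        have hdel' := Finset.mem_filter.mp hdel
        have hinc1 : es b = w ∨ et b = w := mem_Tv_incident es et hbotw.1
        have hinc2 : es b = yv a ∨ et b = yv a := mem_Tv_incident es et hdel'.1
        rcases endpoint_cases es et hinc1 hinc2 with hcase | hcase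
        · -- yv a = w : the deletion site is w itself
          refine ⟨sE a, hcase ▸ hnewbot a haR, ?_, ?_⟩
          · rw [← hcase, hyoth a]
            exact hnewtop a haR
          · have h1 : rk w b < rk w (sE a) := by
              have := hdel'.2
              rwa [hcase] at this
            exact hlt.trans h1
        · -- yv a = oth w b: impossible since b is the top there
          exfalso
          have hsEa : sE a ∈ Tv es et T (oth es et w b) := by rw [← hcase]; exact hsmemy a
          have h4 := htopw.2 (sE a) hsEa
          have h5 : rk (oth es et w b) b < rk (oth es et w b) (sE a) := by
            have := hdel'.2
            rwa [hcase] at this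
          exact absurd h4 (not_le.mpr h5)
      · have hbT' : b ∈ T' :=
          Finset.mem_sdiff.mpr ⟨((mem_Tv es et).mp hbotw.1).1, hbDS⟩
        exact ⟨b, bot_subset es et rk hsub hbotw hbT', top_subset es et rk hsub htopw hbT', hlt⟩
    rcases hINV e he heT with h | h
    · exact Or.inl (hpersist (es e) h)
    · exact Or.inr (hpersist (et e) h)

/-- The master induction: every table satisfying the invariant can be reduced to a
degenerate table with all lists of size at most 2. -/
lemma tan_table (hne : ∀ e, es e ≠ et e) (hinj : ∀ v e f, rk v e = rk v f → e = f)
    (E₀ : Finset E) :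
    ∀ n (T : Finset E), T.card ≤ n → INV es et rk E₀ T →
      ∃ T', T' ⊆ T ∧ INV es et rk E₀ T' ∧ Degen es et rk T' ∧
        ∀ v, (Tv es et T' v).card ≤ 2 := by
  intro n
  induction n with
  | zero =>
    intro T hcard hINV
    have hT : T = ∅ := Finset.card_eq_zero.mp (by omega)
    refine ⟨T, subset_rfl, hINV, ?_, ?_⟩
    · intro u t ht
      have := ((mem_Tv es et).mp ht.1).1
      rw [hT] at this
      exact absurd this (Finset.notMem_empty t)
    · intro v
      have h1 : Tv es et T v ⊆ T := Finset.filter_subset _ _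
      have h2 := Finset.card_le_card h1
      omega
  | succ n ih =>
    intro T hcard hINV
    by_cases hA : ∃ u t, IsTop es et rk T u t ∧
        ∃ f ∈ Tv es et T (oth es et u t), rk (oth es et u t) f < rk (oth es et u t) t
    · obtain ⟨u, t, ht, f, hf, hflt⟩ := hA
      obtain ⟨T₁, hsub₁, hcard₁, hINV₁⟩ := stepA es et rk hne hINV ht hf hflt
      obtain ⟨T', hsub', hi, hd, hc⟩ := ih T₁ (by omega) hINV₁
      exact ⟨T', hsub'.trans hsub₁, hi, hd, hc⟩
    · push_neg at hA
      have hdeg : Degen es et rk T := degen_of_no_step es et rk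
        (fun u t ht f hf => not_lt.mpr (hA u t ht f hf))
      by_cases hB : ∃ x₀, 3 ≤ (Tv es et T x₀).card
      · obtain ⟨x₀, hx₀⟩ := hB
        obtain ⟨T₁, hsub₁, hcard₁, hINV₁⟩ := stepRot es et rk hne hinj hINV hdeg hx₀
        obtain ⟨T', hsub', hi, hd, hc⟩ := ih T₁ (by omega) hINV₁
        exact ⟨T', hsub'.trans hsub₁, hi, hd, hc⟩
      · push_neg at hB
        exact ⟨T, subset_rfl, hINV, hdeg, fun v => by have := hB v; omega⟩
  
lemma Tv_subset_incident {T : Finset E} {v : V} {e : E} (h : e ∈ Tv es et T v) :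
    e ∈ incident es et v := by
  rw [mem_Tv] at h
  exact Finset.mem_filter.mpr ⟨Finset.mem_univ e, h.2⟩

lemma mem_top_or_bot (hinj : ∀ v e f, rk v e = rk v f → e = f) {T : Finset E} {v : V} {e : E}
    (hcard : (Tv es et T v).card ≤ 2) (he : e ∈ Tv es et T v) :
    IsTop es et rk T v e ∨ IsBot es et rk T v e := by
  obtain ⟨t, htop⟩ := exists_top es et rk ⟨e, he⟩
  obtain ⟨b, hbot⟩ := exists_bot es et rk ⟨e, he⟩
  by_cases het : e = t
  · exact Or.inl (het ▸ htop)
  by_cases heb : e = b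
  · exact Or.inr (heb ▸ hbot)
  exfalso
  by_cases htb : t = b
  · have h1 := htop.2 e he
    have h2 := hbot.2 e he
    rw [← htb] at h2
    exact het (hinj v e t (le_antisymm h1 h2))
  · have hsub3 : ({e, t, b} : Finset E) ⊆ Tv es et T v := by
      intro g hg
      rcases Finset.mem_insert.mp hg with h | h
      · exact h ▸ he
      rcases Finset.mem_insert.mp h with h | h
      · exact h ▸ htop.1
      · exact (Finset.mem_singleton.mp h) ▸ hbot.1
    have hcard3 : ({e, t, b} : Finset E).card = 3 := by
      rw [Finset.card_insert_of_notMem, Finset.card_insert_of_notMem,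
        Finset.card_singleton]
      · simp [htb]
      · simp [het, heb]
    have := Finset.card_le_card hsub3
    omega

end Tan

section Extract
variable (es et : E → V) (p : V → E → ℝ) (pE : V → ℝ)

lemma exists_wstable_half' (hne : ∀ e, es e ≠ et e) :
    ∃ M : E → ℝ, IsHalf es et M ∧ WStable es et p pE M := by
  classical
  set idx : E → ℕ := fun e => ((Fintype.equivFin E) e : ℕ) with hidx
  have hidg : Function.Injective idx := fun a b h =>
    (Fintype.equivFin E).injective (Fin.val_injective h)
  set rk : V → E → ℝ ×ₗ ℕ := fun v e => toLex (p v e, idx e) with hrk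
  have hinj : ∀ v e f, rk v e = rk v f → e = f := by
    intro v e f h
    have := toLex.injective h
    rw [Prod.mk.injEq] at this
    exact hidg this.2
  have hmono : ∀ (v : V) (e f : E), rk v e ≤ rk v f → p v e ≤ p v f := by
    intro v e f h
    rw [hrk] at h
    rcases (Prod.Lex.le_iff).mp h with h | h
    · exact le_of_lt h
    · exact le_of_eq h.1
  set E₀ : Finset E := univ.filter
    (fun e => pE (es e) < p (es e) e ∧ pE (et e) < p (et e) e) with hE₀
  have hINV₀ : INV es et rk E₀ E₀ := fun e he heT => absurd he heT
  obtain ⟨T, hTE₀, hINV, hdeg, hsmall⟩ :=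
    tan_table es et rk hne hinj E₀ E₀.card E₀ le_rfl hINV₀
  letI : ∀ v e, Decidable (IsTop es et rk T v e) := fun v e => Classical.propDecidable _
  set M : E → ℝ := fun e => (if IsTop es et rk T (es e) e then (1:ℝ)/2 else 0)
    + (if IsTop es et rk T (et e) e then (1:ℝ)/2 else 0) with hM
  have hM0 : ∀ e, 0 ≤ M e := by
    intro e
    rw [hM]
    dsimp only
    split <;> split <;> norm_num
  have hMval : ∀ e, M e = 0 ∨ M e = 1/2 ∨ M e = 1 := by
    intro e
    rw [hM]
    dsimp only
    split <;> split <;> norm_num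
  have hMposT : ∀ e, 0 < M e → e ∈ T := by
    intro e hpos
    rw [hM] at hpos
    dsimp only at hpos
    by_cases h1 : IsTop es et rk T (es e) e
    · exact ((mem_Tv es et).mp h1.1).1
    by_cases h2 : IsTop es et rk T (et e) e
    · exact ((mem_Tv es et).mp h2.1).1
    rw [if_neg h1, if_neg h2] at hpos
    norm_num at hpos
  have hMpos_top : ∀ e v, (es e = v ∨ et e = v) → IsTop es et rk T (oth es et v e) e →
      0 < M e := by
    intro e v hv htope
    rcases oth_spec es et hv with ⟨h1, h2⟩ | ⟨h1, h2⟩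
    · rw [h2] at htope
      rw [hM]
      dsimp only
      rw [if_pos htope]
      split <;> norm_num
    · rw [h2] at htope
      rw [hM]
      dsimp only
      rw [if_pos htope]
      split <;> norm_num
  have hsumA : ∀ v, (∑ e ∈ incident es et v, if IsTop es et rk T v e then (1:ℝ)/2 else 0)
      = if (Tv es et T v).Nonempty then 1/2 else 0 := by
    intro v
    by_cases hNE : (Tv es et T v).Nonempty
    · obtain ⟨t, htop⟩ := exists_top es et rk hNE
      rw [if_pos hNE, ← Finset.sum_filter]
      have : (incident es et v).filter (fun e => IsTop es et rk T v e) = {t} := by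
        refine Finset.eq_singleton_iff_unique_mem.mpr
          ⟨Finset.mem_filter.mpr ⟨Tv_subset_incident es et htop.1, htop⟩, fun f hf => ?_⟩
        exact top_unique es et rk hinj (Finset.mem_filter.mp hf).2 htop
      rw [this, Finset.sum_singleton]
    · rw [if_neg hNE]
      refine Finset.sum_eq_zero (fun e he => ?_)
      rw [if_neg (fun hc : IsTop es et rk T v e => hNE ⟨e, hc.1⟩)]
  have hBiff : ∀ v, ∀ e ∈ incident es et v,
      (IsTop es et rk T (oth es et v e) e ↔ IsBot es et rk T v e) := by
    intro v e he
    have hinc : es e = v ∨ et e = v := (Finset.mem_filter.mp he).2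
    constructor
    · intro h
      have := hdeg (oth es et v e) e h
      rwa [oth_oth es et hne hinc] at this
    · intro h
      exact bot_top es et rk hne hinj hdeg h
  have hsumB : ∀ v, (∑ e ∈ incident es et v,
      if IsTop es et rk T (oth es et v e) e then (1:ℝ)/2 else 0)
      = if (Tv es et T v).Nonempty then 1/2 else 0 := by
    intro v
    by_cases hNE : (Tv es et T v).Nonempty
    · obtain ⟨b, hbot⟩ := exists_bot es et rk hNE
      rw [if_pos hNE, ← Finset.sum_filter]
      have : (incident es et v).filter (fun e => IsTop es et rk T (oth es et v e) e)
          = {b} := by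
        refine Finset.eq_singleton_iff_unique_mem.mpr
          ⟨Finset.mem_filter.mpr ⟨Tv_subset_incident es et hbot.1, ?_⟩, fun f hf => ?_⟩
        · exact (hBiff v b (Tv_subset_incident es et hbot.1)).mpr hbot
        · have hf' := Finset.mem_filter.mp hf
          exact bot_unique es et rk hinj ((hBiff v f hf'.1).mp hf'.2) hbot
      rw [this, Finset.sum_singleton]
    · rw [if_neg hNE]
      refine Finset.sum_eq_zero (fun e he => ?_)
      rw [if_neg]
      intro hc
      exact hNE ⟨e, ((hBiff v e he).mp hc).1⟩
  have htermM : ∀ v, ∀ e ∈ incident es et v,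
      M e = (if IsTop es et rk T v e then (1:ℝ)/2 else 0)
        + (if IsTop es et rk T (oth es et v e) e then (1:ℝ)/2 else 0) := by
    intro v e he
    have hinc : es e = v ∨ et e = v := (Finset.mem_filter.mp he).2
    rcases oth_spec es et hinc with ⟨h1, h2⟩ | ⟨h1, h2⟩
    · have h3 : oth es et (es e) e = et e := by rw [h1]; exact h2
      rw [hM, ← h1, h3]
    · have h3 : oth es et (et e) e = es e := by rw [h1]; exact h2
      rw [hM, ← h1, h3]
      ring
  have hdegSum : ∀ v, degSum es et M v = if (Tv es et T v).Nonempty then 1 else 0 := by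
    intro v
    unfold degSum
    rw [Finset.sum_congr rfl (htermM v), Finset.sum_add_distrib, hsumA v, hsumB v]
    split <;> norm_num
  have hfrac : IsFrac es et M := by
    refine ⟨hM0, fun v => ?_⟩
    rw [hdegSum]
    split <;> norm_num
  -- pval facts
  have hDb : ∀ v, ∀ f ∈ (incident es et v).filter (fun e => 0 < M e), f ∈ Tv es et T v := by
    intro v f hf
    have hf' := Finset.mem_filter.mp hf
    exact (mem_Tv es et).mpr ⟨hMposT f hf'.2, (Finset.mem_filter.mp hf'.1).2⟩
  have hpvcond : ∀ v, (Tv es et T v).Nonempty →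
      (degSum es et M v = 1 ∧ ((incident es et v).filter fun e => 0 < M e).Nonempty) := by
    intro v hNE
    refine ⟨by rw [hdegSum, if_pos hNE], ?_⟩
    obtain ⟨b, hbot⟩ := exists_bot es et rk hNE
    have hbinc : es b = v ∨ et b = v := mem_Tv_incident es et hbot.1
    refine ⟨b, Finset.mem_filter.mpr ⟨Tv_subset_incident es et hbot.1, ?_⟩⟩
    exact hMpos_top b v hbinc (bot_top es et rk hne hinj hdeg hbot)
  have hpval_le : ∀ v, (Tv es et T v).Nonempty → ∀ e ∈ incident es et v, 0 < M e →
      pval es et p pE M v ≤ p v e := by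
    intro v hNE e he hpos
    unfold pval
    rw [dif_pos (hpvcond v hNE)]
    exact Finset.inf'_le _ (Finset.mem_filter.mpr ⟨he, hpos⟩)
  have hle_pval : ∀ v, (Tv es et T v).Nonempty → ∀ x : ℝ,
      (∀ f ∈ (incident es et v).filter (fun e => 0 < M e), x ≤ p v f) →
      x ≤ pval es et p pE M v := by
    intro v hNE x hx
    unfold pval
    rw [dif_pos (hpvcond v hNE)]
    exact Finset.le_inf' _ _ hx
  have hpval_pE : ∀ v, ¬ (Tv es et T v).Nonempty → pval es et p pE M v = pE v := by
    intro v hNE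
    unfold pval
    rw [dif_neg]
    intro hc
    rw [hdegSum, if_neg hNE] at hc
    norm_num at hc
  refine ⟨M, ⟨hfrac, hMval⟩, ?_⟩
  -- weak stability
  intro e
  by_cases heT : e ∈ T
  · -- table edge: bottom endpoint is satisfied
    have heTv : e ∈ Tv es et T (es e) := (mem_Tv es et).mpr ⟨heT, Or.inl rfl⟩
    have hbotcase : IsBot es et rk T (es e) e ∨ IsBot es et rk T (et e) e := by
      rcases mem_top_or_bot es et rk hinj (hsmall (es e)) heTv with h | h
      · right
        have := hdeg (es e) e h
        rwa [show oth es et (es e) e = et e by unfold oth; rw [if_pos rfl]] at this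
      · exact Or.inl h
    have key : ∀ w, (es e = w ∨ et e = w) → IsBot es et rk T w e →
        p w e ≤ pval es et p pE M w := by
      intro w hw hbot
      have hNE : (Tv es et T w).Nonempty := ⟨e, hbot.1⟩
      refine hle_pval w hNE _ (fun f hf => ?_)
      exact hmono w e f (hbot.2 f (hDb w f hf))
    rcases hbotcase with h | h
    · exact Or.inl (key (es e) (Or.inl rfl) h)
    · exact Or.inr (key (et e) (Or.inr rfl) h)
  · by_cases heE₀ : e ∈ E₀
    · have hcov := hINV e heE₀ heT
      have key : ∀ w, Cov es et rk T w e → p w e ≤ pval es et p pE M w := by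
        intro w ⟨b, hbot, _, hlt⟩
        have hNE : (Tv es et T w).Nonempty := ⟨b, hbot.1⟩
        refine hle_pval w hNE _ (fun f hf => ?_)
        have hfTv := hDb w f hf
        exact hmono w e f (le_of_lt (lt_of_lt_of_le hlt (hbot.2 f hfTv)))
      rcases hcov with h | h
      · exact Or.inl (key (es e) h)
      · exact Or.inr (key (et e) h)
    · -- unacceptable edge
      have hun : p (es e) e ≤ pE (es e) ∨ p (et e) e ≤ pE (et e) := by
        rw [hE₀] at heE₀
        simp only [Finset.mem_filter, Finset.mem_univ, true_and, not_and_or, not_lt] at heE₀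
        exact heE₀
      have key : ∀ w, p w e ≤ pE w → p w e ≤ pval es et p pE M w := by
        intro w hle
        by_cases hNE : (Tv es et T w).Nonempty
        · refine hle_pval w hNE _ (fun f hf => ?_)
          have hfTv := hDb w f hf
          have hfE₀ : f ∈ E₀ := hTE₀ ((mem_Tv es et).mp hfTv).1
          rw [hE₀, Finset.mem_filter] at hfE₀
          have hfw : es f = w ∨ et f = w := (mem_Tv es et).mp hfTv |>.2
          have : pE w < p w f := by
            rcases hfw with h | h
            · exact h ▸ hfE₀.2.1
            · exact h ▸ hfE₀.2.2
          linarith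
        · rw [hpval_pE w hNE]
          exact hle
      rcases hun with h | h
      · exact Or.inl (key (es e) h)
      · exact Or.inr (key (et e) h)

end Extract

/-- For every roommates instance with ties and numbers
`0 < γ_e^v < δ_e^v`, there is a `γ`-stable half-matching `M` such that every
`γ`-stable fractional-matching `N` satisfies `Σ N(e) ≤ (3/2) Σ M(e)`. -/
theorem exists_gammaStable_halfMatching_three_halves
    {V E : Type*} [Fintype V] [Fintype E] [DecidableEq V] [DecidableEq E]
    (es et : E → V) (hne : ∀ e, es e ≠ et e)
    (p : V → E → ℝ) (pE : V → ℝ)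
    (hp : ∀ v, ∀ e ∈ incident es et v, 0 ≤ p v e)
    (hpE : ∀ v, pE v ≤ 0)
    (γ δ : V → E → ℝ)
    (hγ : ∀ v, ∀ e ∈ incident es et v, 0 < γ v e)
    (hγδ : ∀ v, ∀ e ∈ incident es et v, γ v e < δ v e) :
    ∃ M : E → ℝ, IsHalf es et M ∧ GammaStable es et p pE γ δ M ∧
      ∀ N : E → ℝ, IsFrac es et N → GammaStable es et p pE γ δ N →
        size N ≤ 3 / 2 * size M := by
  classical
  set Q : Set (E → ℝ) := {M | IsHalf es et M ∧ GammaStable es et p pE γ δ M} with hQ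
  have hQfin : Q.Finite := by
    have hsub : Q ⊆ Set.pi Set.univ (fun _ : E => ({0, 1/2, 1} : Set ℝ)) := by
      intro M hM
      intro e _
      rcases hM.1.2 e with h | h | h <;> simp [h]
    exact Set.Finite.subset (Set.Finite.pi (fun _ => (Set.toFinite _))) hsub
  have hQne : Q.Nonempty := by
    obtain ⟨M₀, hM₀h, hM₀s⟩ := exists_wstable_half' es et p pE hne
    exact ⟨M₀, hM₀h, hM₀s.gammaStable hγ hγδ⟩
  obtain ⟨Mstar, hMstarQ, hmax⟩ := Finset.exists_max_image hQfin.toFinset size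
    (by rwa [Set.Finite.toFinset_nonempty])
  rw [Set.Finite.mem_toFinset] at hMstarQ
  refine ⟨Mstar, hMstarQ.1, hMstarQ.2, fun N hNf hNs => ?_⟩
  obtain ⟨M', hM'h, hM'supp, hM'sat, hM'size⟩ := exists_rounding es et hne N hNf
  have hpv := pval_mono es et p pE hp hpE N M' hM'supp hM'sat hM'h.1.1
  have hM's : GammaStable es et p pE γ δ M' := by
    intro e hb
    exact hNs e (gammaBlocks_mono es et p pE γ δ N M' hpv e hb)
  have hM'Q : M' ∈ hQfin.toFinset := by
    rw [Set.Finite.mem_toFinset]; exact ⟨hM'h, hM's⟩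
  have h1 : size M' ≤ size Mstar := hmax M' hM'Q
  have h2 : 0 ≤ size Mstar := Finset.sum_nonneg (fun e _ => hMstarQ.1.1.1 e)
  unfold size at *
  linarith

end SR
end

section
/- Let I be a roommates instance with ties and numbers 0<γ_e^v<δ_e^v, let I' be a 4-copy instance of I, and let M' be a stable half-matching of I' with respect to the strict orders ≻'_v. Then the projection M of M' is a γ-stable half-matching of I. -/
open Finset

namespace SR

variable {V E : Type*} [Fintype V] [Fintype E] [DecidableEq V] [DecidableEq E]

/-- The letter of the copy `c` at the endpoint `v` of the underlying edge:
`0,1,2,3` stand for `a,b,c,d` respectively.  The first endpoint `es c.1` reads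
the four copies in the order `a,b,c,d` and the second endpoint in the opposite
order. -/
def letterAt (es : E → V) (v : V) (c : E × Fin 4) : Fin 4 :=
  if v = es c.1 then c.2 else 3 - c.2

/-- The valuation `q_v` on the `a,b,c`-copies of the 4-copy instance. -/
noncomputable def qval (es : E → V) (p γ δ : V → E → ℝ) (v : V)
    (c : E × Fin 4) : ℝ :=
  if letterAt es v c = 0 then p v c.1
  else if letterAt es v c = 1 then p v c.1 - γ v c.1
  else p v c.1 - δ v c.1

lemma incident_copy (es et : E → V) (w : V) :
    incident (fun c : E × Fin 4 => es c.1) (fun c => et c.1) w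
      = (incident es et w) ×ˢ (univ : Finset (Fin 4)) := by
  ext c
  simp [incident, Finset.mem_product]

lemma degSum_copy (es et : E → V) (M' : E × Fin 4 → ℝ) (w : V) :
    degSum (fun c : E × Fin 4 => es c.1) (fun c => et c.1) M' w
      = degSum es et (fun e => ∑ k : Fin 4, M' (e, k)) w := by
  rw [degSum, incident_copy, Finset.sum_product]
  rfl

/-- Key lemma: if `w` is saturated by the projection and `b` is a `b`- or `c`-copy
incident to `w` whose `q`-value is at least `pval`, then there is a positive copy
that `w` likes strictly less than `b`. -/
lemma key_exists {V E : Type*} [Fintype V] [Fintype E] [DecidableEq V] [DecidableEq E]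
    (es et : E → V)
    (p : V → E → ℝ) (pE : V → ℝ)
    (γ δ : V → E → ℝ)
    (hγ : ∀ v, ∀ e ∈ incident es et v, 0 < γ v e)
    (hγδ : ∀ v, ∀ e ∈ incident es et v, γ v e < δ v e)
    (pref' : V → (E × Fin 4) → (E × Fin 4) → Prop)
    (hA : ∀ v, ∀ c ∈ incident (fun c : E × Fin 4 => es c.1) (fun c => et c.1) v,
      ∀ d ∈ incident (fun c : E × Fin 4 => es c.1) (fun c => et c.1) v,
        letterAt es v d = 3 → letterAt es v c ≠ 3 → pref' v c d)
    (hB : ∀ v, ∀ c ∈ incident (fun c : E × Fin 4 => es c.1) (fun c => et c.1) v,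
      ∀ d ∈ incident (fun c : E × Fin 4 => es c.1) (fun c => et c.1) v,
        letterAt es v c ≠ 3 → letterAt es v d ≠ 3 →
        qval es p γ δ v d < qval es p γ δ v c → pref' v c d)
    (hC : ∀ v, ∀ c ∈ incident (fun c : E × Fin 4 => es c.1) (fun c => et c.1) v,
      ∀ d ∈ incident (fun c : E × Fin 4 => es c.1) (fun c => et c.1) v,
        letterAt es v c ≠ 3 → letterAt es v d ≠ 3 →
        qval es p γ δ v c = qval es p γ δ v d →
        letterAt es v d < letterAt es v c → pref' v c d)
    (M' : E × Fin 4 → ℝ) (hM'0 : ∀ c, 0 ≤ M' c)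
    (w : V) (b : E × Fin 4)
    (hbinc : es b.1 = w ∨ et b.1 = w)
    (hbl3 : letterAt es w b ≠ 3) (hbl0 : letterAt es w b ≠ 0)
    (hsat : degSum es et (fun e => ∑ k : Fin 4, M' (e, k)) w = 1)
    (hq : pval es et p pE (fun e => ∑ k : Fin 4, M' (e, k)) w
        ≤ qval es p γ δ w b) :
    ∃ f ∈ incident (fun c : E × Fin 4 => es c.1) (fun c => et c.1) w,
      0 < M' f ∧ pref' w b f := by
  classical
  set M : E → ℝ := fun e => ∑ k : Fin 4, M' (e, k) with hMdef
  have hM0 : ∀ e, 0 ≤ M e := fun e => Finset.sum_nonneg fun k _ => hM'0 _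
  -- some incident edge has positive projection
  have hpos : ∃ e ∈ incident es et w, 0 < M e := by
    by_contra hcon
    push_neg at hcon
    have : degSum es et M w = 0 :=
      Finset.sum_eq_zero fun f hf => le_antisymm (hcon f hf) (hM0 f)
    rw [this] at hsat; norm_num at hsat
  have hNe : ((incident es et w).filter fun f => 0 < M f).Nonempty := by
    obtain ⟨e, he, hpe⟩ := hpos
    exact ⟨e, Finset.mem_filter.2 ⟨he, hpe⟩⟩
  have hpv : pval es et p pE M w
      = ((incident es et w).filter fun f => 0 < M f).inf' hNe (p w) := by
    rw [pval, dif_pos ⟨hsat, hNe⟩]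
  obtain ⟨e₀, he₀S, he₀⟩ := Finset.exists_mem_eq_inf' hNe (p w)
  obtain ⟨he₀inc, he₀pos⟩ := Finset.mem_filter.1 he₀S
  -- some copy of e₀ is positive
  have : ∑ k : Fin 4, (0 : ℝ) < ∑ k : Fin 4, M' (e₀, k) := by
    simpa using he₀pos
  obtain ⟨k, -, hk⟩ := Finset.exists_lt_of_sum_lt this
  set f : E × Fin 4 := (e₀, k) with hfdef
  have hfw : es f.1 = w ∨ et f.1 = w := by
    simpa [incident] using he₀inc
  have hbmem : b ∈ incident (fun c : E × Fin 4 => es c.1) (fun c => et c.1) w := by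
    simp [incident, hbinc]
  have hfmem : f ∈ incident (fun c : E × Fin 4 => es c.1) (fun c => et c.1) w := by
    simp [incident, hfw]
  refine ⟨f, hfmem, hk, ?_⟩
  by_cases hl3 : letterAt es w f = 3
  · exact hA w b hbmem f hfmem hl3 hbl3
  · have hγ0 : 0 < γ w e₀ := hγ w e₀ he₀inc
    have hδ0 : 0 < δ w e₀ := lt_trans hγ0 (hγδ w e₀ he₀inc)
    have hq1 : qval es p γ δ w f ≤ p w e₀ := by
      rw [qval]
      split_ifs <;> simp only [hfdef] <;> linarith
    have hqfb : qval es p γ δ w f ≤ qval es p γ δ w b := by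
      have : p w e₀ ≤ qval es p γ δ w b := by
        rw [← he₀, ← hpv]; exact hq
      linarith
    rcases lt_or_eq_of_le hqfb with hlt | heq
    · exact hB w b hbmem f hfmem hbl3 hl3 hlt
    · -- equality forces `f` to be an `a`-copy
      have hfeq : qval es p γ δ w f = p w e₀ := by
        have : p w e₀ ≤ qval es p γ δ w f := by
          rw [heq, ← he₀, ← hpv]; exact hq
        linarith
      have hl0 : letterAt es w f = 0 := by
        by_contra h0
        rw [qval, if_neg h0] at hfeq
        split_ifs at hfeq <;> simp only [hfdef] at hfeq <;> linarith
      refine hC w b hbmem f hfmem hbl3 hl3 heq.symm ?_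
      rw [hl0]
      exact Fin.pos_of_ne_zero hbl0

/-- The projection of a stable half-matching of a 4-copy
instance is a `γ`-stable half-matching of the original instance. -/
theorem projection_isHalf_and_gammaStable
    {V E : Type*} [Fintype V] [Fintype E] [DecidableEq V] [DecidableEq E]
    (es et : E → V) (hne : ∀ e, es e ≠ et e)
    (p : V → E → ℝ) (pE : V → ℝ)
    (hp : ∀ v, ∀ e ∈ incident es et v, 0 ≤ p v e)
    (hpE : ∀ v, pE v ≤ 0)
    (γ δ : V → E → ℝ)
    (hγ : ∀ v, ∀ e ∈ incident es et v, 0 < γ v e)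
    (hγδ : ∀ v, ∀ e ∈ incident es et v, γ v e < δ v e)
    (pref' : V → (E × Fin 4) → (E × Fin 4) → Prop)
    (hlin : IsStrictPref (fun c => es c.1) (fun c => et c.1) pref')
    (hA : ∀ v, ∀ c ∈ incident (fun c : E × Fin 4 => es c.1) (fun c => et c.1) v,
      ∀ d ∈ incident (fun c : E × Fin 4 => es c.1) (fun c => et c.1) v,
        letterAt es v d = 3 → letterAt es v c ≠ 3 → pref' v c d)
    (hB : ∀ v, ∀ c ∈ incident (fun c : E × Fin 4 => es c.1) (fun c => et c.1) v,
      ∀ d ∈ incident (fun c : E × Fin 4 => es c.1) (fun c => et c.1) v,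
        letterAt es v c ≠ 3 → letterAt es v d ≠ 3 →
        qval es p γ δ v d < qval es p γ δ v c → pref' v c d)
    (hC : ∀ v, ∀ c ∈ incident (fun c : E × Fin 4 => es c.1) (fun c => et c.1) v,
      ∀ d ∈ incident (fun c : E × Fin 4 => es c.1) (fun c => et c.1) v,
        letterAt es v c ≠ 3 → letterAt es v d ≠ 3 →
        qval es p γ δ v c = qval es p γ δ v d →
        letterAt es v d < letterAt es v c → pref' v c d)
    (hD : ∀ v, ∀ c ∈ incident (fun c : E × Fin 4 => es c.1) (fun c => et c.1) v,
      ∀ d ∈ incident (fun c : E × Fin 4 => es c.1) (fun c => et c.1) v,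
        letterAt es v c = 3 → letterAt es v d = 3 →
        p v d.1 < p v c.1 → pref' v c d)
    (M' : E × Fin 4 → ℝ)
    (hM' : IsHalf (fun c => es c.1) (fun c => et c.1) M')
    (hstab : StableStrict (fun c => es c.1) (fun c => et c.1) pref' M') :
    IsHalf es et (fun e => ∑ k : Fin 4, M' (e, k)) ∧
    GammaStable es et p pE γ δ (fun e => ∑ k : Fin 4, M' (e, k)) := by
  classical
  set M : E → ℝ := fun e => ∑ k : Fin 4, M' (e, k) with hMdef
  obtain ⟨⟨hM'0, hM'deg⟩, hM'half⟩ := hM'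
  have hM0 : ∀ e, 0 ≤ M e := fun e => Finset.sum_nonneg fun k _ => hM'0 _
  have hdeg : ∀ w, degSum es et M w ≤ 1 := by
    intro w
    rw [← degSum_copy]
    exact hM'deg w
  have hMle : ∀ e, M e ≤ 1 := by
    intro e
    have hei : e ∈ incident es et (es e) := by simp [incident]
    have h1 : M e ≤ degSum es et M (es e) :=
      Finset.single_le_sum (fun f _ => hM0 f) hei
    linarith [hdeg (es e)]
  constructor
  · refine ⟨⟨hM0, hdeg⟩, fun e => ?_⟩
    have h0 := hM'half (e, 0)
    have h1 := hM'half (e, 1)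
    have h2 := hM'half (e, 2)
    have h3 := hM'half (e, 3)
    have hle := hMle e
    have hsum : M e = M' (e, 0) + M' (e, 1) + M' (e, 2) + M' (e, 3) := by
      simp [hMdef, Fin.sum_univ_four]
    rw [hsum] at hle ⊢
    rcases h0 with h0 | h0 | h0 <;> rcases h1 with h1 | h1 | h1 <;>
      rcases h2 with h2 | h2 | h2 <;> rcases h3 with h3 | h3 | h3 <;>
      rw [h0, h1, h2, h3] at hle ⊢ <;> revert hle <;> norm_num
  · intro e hblock
    have huinc : e ∈ incident es et (es e) := by simp [incident]
    have hvinc : e ∈ incident es et (et e) := by simp [incident]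
    -- helper: if some copy of `e` has value 1, then `pval (es e) = p (es e) e`
    have hlt1 : ∀ (j : Fin 4) (c : ℝ), 0 < c →
        pval es et p pE M (es e) ≤ p (es e) e - c → M' (e, j) < 1 := by
      intro j c hc hq
      by_contra hge
      push_neg at hge
      have hMe1 : M e = 1 := by
        refine le_antisymm (hMle e) ?_
        calc (1 : ℝ) ≤ M' (e, j) := hge
        _ ≤ M e := Finset.single_le_sum (fun k _ => hM'0 (e, k)) (mem_univ j)
      have hsat : degSum es et M (es e) = 1 := by
        refine le_antisymm (hdeg (es e)) ?_
        calc (1 : ℝ) = M e := hMe1.symm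
        _ ≤ degSum es et M (es e) := Finset.single_le_sum (fun f _ => hM0 f) huinc
      have hNe : ((incident es et (es e)).filter fun f => 0 < M f).Nonempty :=
        ⟨e, Finset.mem_filter.2 ⟨huinc, by rw [hMe1]; norm_num⟩⟩
      have hpv : pval es et p pE M (es e)
          = ((incident es et (es e)).filter fun f => 0 < M f).inf' hNe (p (es e)) := by
        rw [pval, dif_pos ⟨hsat, hNe⟩]
      have hzsum : ∑ f ∈ (incident es et (es e)).erase e, M f = 0 := by
        have := Finset.add_sum_erase (incident es et (es e)) M huinc
        rw [hMe1] at this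
        have hds : degSum es et M (es e) = ∑ f ∈ incident es et (es e), M f := rfl
        rw [hds] at hsat
        linarith
      have hzero : ∀ f ∈ incident es et (es e), f ≠ e → M f = 0 := by
        intro f hf hfe
        have hmem : f ∈ (incident es et (es e)).erase e := Finset.mem_erase.2 ⟨hfe, hf⟩
        exact (Finset.sum_eq_zero_iff_of_nonneg fun g _ => hM0 g).1 hzsum f hmem
      have hval : p (es e) e ≤ pval es et p pE M (es e) := by
        rw [hpv]
        apply Finset.le_inf'
        intro f hf
        obtain ⟨hfi, hfpos⟩ := Finset.mem_filter.1 hf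
        by_cases hfe : f = e
        · rw [hfe]
        · exact absurd (hzero f hfi hfe) (ne_of_gt hfpos)
      linarith
    have hvne : et e ≠ es e := (hne e).symm
    rcases hblock with h | h
    · -- γ at es e, δ at et e: the copy (e,1) strictly blocks M'
      have hqu : pval es et p pE M (es e) ≤ p (es e) e - γ (es e) e := by
        have := le_trans h (min_le_left _ _); linarith
      have hqv : pval es et p pE M (et e) ≤ p (et e) e - δ (et e) e := by
        have := le_trans h (min_le_right _ _); linarith
      have hblu : letterAt es (es e) (e, 1) = 1 := by simp [letterAt]
      have hblv : letterAt es (et e) (e, 1) = 2 := by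
        rw [letterAt, if_neg hvne]; rfl
      refine hstab (e, 1) ⟨hlt1 1 (γ (es e) e) (hγ (es e) e huinc) hqu, ?_⟩
      intro w hw
      simp only at hw
      by_cases hsatw : degSum es et M w = 1
      · right
        rcases hw with hw | hw <;> subst hw
        · refine key_exists es et p pE γ δ hγ hγδ pref' hA hB hC M' hM'0 (es e) (e, 1)
            (Or.inl rfl) (by rw [hblu]; decide) (by rw [hblu]; decide)
            hsatw ?_
          rw [qval, if_neg (by rw [hblu]; decide), if_pos hblu]
          exact hqu
        · refine key_exists es et p pE γ δ hγ hγδ pref' hA hB hC M' hM'0 (et e) (e, 1)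
            (Or.inr rfl) (by rw [hblv]; decide) (by rw [hblv]; decide)
            hsatw ?_
          rw [qval, if_neg (by rw [hblv]; decide), if_neg (by rw [hblv]; decide)]
          exact hqv
      · left
        intro hcon
        rw [Saturated, degSum_copy] at hcon
        exact hsatw hcon
    · -- δ at es e, γ at et e: the copy (e,2) strictly blocks M'
      have hqu : pval es et p pE M (es e) ≤ p (es e) e - δ (es e) e := by
        have := le_trans h (min_le_left _ _); linarith
      have hqv : pval es et p pE M (et e) ≤ p (et e) e - γ (et e) e := by
        have := le_trans h (min_le_right _ _); linarith
      have hblu : letterAt es (es e) (e, 2) = 2 := by simp [letterAt]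
      have hblv : letterAt es (et e) (e, 2) = 1 := by
        rw [letterAt, if_neg hvne]; rfl
      have hδu : 0 < δ (es e) e := lt_trans (hγ (es e) e huinc) (hγδ (es e) e huinc)
      refine hstab (e, 2) ⟨hlt1 2 (δ (es e) e) hδu hqu, ?_⟩
      intro w hw
      simp only at hw
      by_cases hsatw : degSum es et M w = 1
      · right
        rcases hw with hw | hw <;> subst hw
        · refine key_exists es et p pE γ δ hγ hγδ pref' hA hB hC M' hM'0 (es e) (e, 2)
            (Or.inl rfl) (by rw [hblu]; decide) (by rw [hblu]; decide)
            hsatw ?_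
          rw [qval, if_neg (by rw [hblu]; decide), if_neg (by rw [hblu]; decide)]
          exact hqu
        · refine key_exists es et p pE γ δ hγ hγδ pref' hA hB hC M' hM'0 (et e) (e, 2)
            (Or.inr rfl) (by rw [hblv]; decide) (by rw [hblv]; decide)
            hsatw ?_
          rw [qval, if_neg (by rw [hblv]; decide), if_pos hblv]
          exact hqv
      · left
        intro hcon
        rw [Saturated, degSum_copy] at hcon
        exact hsatw hcon

end SR
end

section
/- Let I be a roommates instance with ties and numbers 0<γ_e^v<δ_e^v, let I' be a 4-copy instance of I, let M' be a stable half-matching of I' with respect to the strict orders ≻'_v, and let M be the projection of M'. Then for every γ-stable half-matching N of I, Σ_{e∈E} N(e) ≤ (3/2)·Σ_{e∈E} M(e). -/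
open Finset

namespace SR

variable {V E : Type*} [Fintype V] [Fintype E] [DecidableEq V] [DecidableEq E]

set_option linter.unusedSectionVars false

def otherEnd (es et : E → V) (v : V) (e : E) : V := if es e = v then et e else es e

lemma mem_incident_iff {es et : E → V} {v : V} {e : E} :
    e ∈ incident es et v ↔ es e = v ∨ et e = v := by
  simp [incident]

lemma otherEnd_es (es et : E → V) (e : E) : otherEnd es et (es e) e = et e := by
  simp [otherEnd]

lemma otherEnd_et (es et : E → V) (hne : ∀ e, es e ≠ et e) (e : E) :
    otherEnd es et (et e) e = es e := by
  simp [otherEnd, hne e]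

lemma endpoints_pair (es et : E → V) (e : E) (v : V)
    (h : es e = v ∨ et e = v) :
    (es e = otherEnd es et v e ∧ et e = v) ∨ (es e = v ∧ et e = otherEnd es et v e) := by
  by_cases h1 : es e = v
  · right; exact ⟨h1, by simp [otherEnd, h1]⟩
  · left
    rcases h with h | h
    · exact absurd h h1
    · exact ⟨by simp [otherEnd, h1], h⟩

lemma otherEnd_invol (es et : E → V) (hne : ∀ e, es e ≠ et e) (e : E) (v : V)
    (h : es e = v ∨ et e = v) :
    otherEnd es et (otherEnd es et v e) e = v := by
  by_cases h1 : es e = v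
  · rw [show otherEnd es et v e = et e from by simp [otherEnd, h1]]
    rw [otherEnd_et es et hne, h1]
  · rcases h with h | h
    · exact absurd h h1
    · rw [show otherEnd es et v e = es e from by simp [otherEnd, h1]]
      rw [otherEnd_es, h]

lemma otherEnd_mem (es et : E → V) (e : E) (v : V)
    (h : es e = v ∨ et e = v) :
    es e = otherEnd es et v e ∨ et e = otherEnd es et v e := by
  rcases endpoints_pair es et e v h with ⟨h1, _⟩ | ⟨_, h2⟩
  · exact Or.inl h1
  · exact Or.inr h2

lemma sum_incident (es et : E → V) (hne : ∀ e, es e ≠ et e) (F : V → E → ℝ) :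
    ∑ v, ∑ e ∈ incident es et v, F v e = ∑ e, (F (es e) e + F (et e) e) := by
  classical
  have h1 : ∀ v, ∑ e ∈ incident es et v, F v e
      = ∑ e, if es e = v ∨ et e = v then F v e else 0 := by
    intro v; rw [incident, Finset.sum_filter]
  simp_rw [h1]
  rw [Finset.sum_comm]
  refine Finset.sum_congr rfl fun e _ => ?_
  have h2 : ∀ v : V, (if es e = v ∨ et e = v then F v e else 0)
      = (if v ∈ ({es e, et e} : Finset V) then F v e else 0) := by
    intro v
    refine if_congr ?_ rfl rfl
    simp [eq_comm, or_comm]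
  simp_rw [h2]
  rw [Finset.sum_ite_mem, Finset.univ_inter, Finset.sum_pair (hne e)]

lemma degSum_copies (es et : E → V) (M' : E × Fin 4 → ℝ) (v : V) :
    degSum (fun c : E × Fin 4 => es c.1) (fun c => et c.1) M' v
      = degSum es et (fun e => ∑ k : Fin 4, M' (e, k)) v := by
  classical
  unfold degSum
  rw [show (incident (fun c : E × Fin 4 => es c.1) (fun c => et c.1) v)
      = (incident es et v) ×ˢ (univ : Finset (Fin 4)) from ?_]
  · rw [Finset.sum_product]
  · ext ⟨e, k⟩
    simp [incident]

lemma half_sum_int (A : Finset E) (f : E → ℝ)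
    (hf : ∀ e ∈ A, f e = 0 ∨ f e = 1/2 ∨ f e = 1) :
    ∃ n : ℕ, ∑ e ∈ A, f e = n / 2 := by
  classical
  induction A using Finset.cons_induction with
  | empty => exact ⟨0, by simp⟩
  | cons a s ha ih =>
    obtain ⟨n, hn⟩ := ih (fun e he => hf e (Finset.mem_cons_of_mem he))
    rcases hf a (Finset.mem_cons_self a s) with h | h | h
    · exact ⟨n, by rw [Finset.sum_cons, hn, h]; ring⟩
    · exact ⟨n + 1, by rw [Finset.sum_cons, hn, h]; push_cast; ring⟩
    · exact ⟨n + 2, by rw [Finset.sum_cons, hn, h]; push_cast; ring⟩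

lemma qval_eq0 (es : E → V) (p γ δ : V → E → ℝ) (v : V) (c : E × Fin 4)
    (hl : letterAt es v c = 0) : qval es p γ δ v c = p v c.1 := by
  rw [qval, if_pos hl]

lemma qval_eq1 (es : E → V) (p γ δ : V → E → ℝ) (v : V) (c : E × Fin 4)
    (hl : letterAt es v c = 1) : qval es p γ δ v c = p v c.1 - γ v c.1 := by
  have h0 : letterAt es v c ≠ 0 := by rw [hl]; decide
  rw [qval, if_neg h0, if_pos hl]

lemma qval_eq2 (es : E → V) (p γ δ : V → E → ℝ) (v : V) (c : E × Fin 4)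
    (hl : letterAt es v c = 2) : qval es p γ δ v c = p v c.1 - δ v c.1 := by
  have h0 : letterAt es v c ≠ 0 := by rw [hl]; decide
  have h1 : letterAt es v c ≠ 1 := by rw [hl]; decide
  rw [qval, if_neg h0, if_neg h1]

lemma keyL2 (es et : E → V) (hne : ∀ e, es e ≠ et e)
    (p γ δ : V → E → ℝ)
    (pref' : V → (E × Fin 4) → (E × Fin 4) → Prop)
    (hlin : IsStrictPref (fun c => es c.1) (fun c => et c.1) pref')
    (hA : ∀ v, ∀ c ∈ incident (fun c : E × Fin 4 => es c.1) (fun c => et c.1) v,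
      ∀ d ∈ incident (fun c : E × Fin 4 => es c.1) (fun c => et c.1) v,
        letterAt es v d = 3 → letterAt es v c ≠ 3 → pref' v c d)
    (hB : ∀ v, ∀ c ∈ incident (fun c : E × Fin 4 => es c.1) (fun c => et c.1) v,
      ∀ d ∈ incident (fun c : E × Fin 4 => es c.1) (fun c => et c.1) v,
        letterAt es v c ≠ 3 → letterAt es v d ≠ 3 →
        qval es p γ δ v d < qval es p γ δ v c → pref' v c d)
    (M' : E × Fin 4 → ℝ)
    (hM'f : IsFrac (fun c : E × Fin 4 => es c.1) (fun c => et c.1) M')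
    (hstab : StableStrict (fun c : E × Fin 4 => es c.1) (fun c => et c.1) pref' M')
    (e : E) (v u : V)
    (hvu : (es e = v ∧ et e = u) ∨ (es e = u ∧ et e = v))
    (hv : degSum es et (fun e => ∑ k : Fin 4, M' (e, k)) v < 1) :
    degSum es et (fun e => ∑ k : Fin 4, M' (e, k)) u = 1 ∧
      ∀ c : E × Fin 4, (es c.1 = u ∨ et c.1 = u) → 0 < M' c →
        letterAt es u c ≠ 3 ∧ p u e ≤ qval es p γ δ u c := by
  classical
  have hvne : v ≠ u := by
    rcases hvu with ⟨h1, h2⟩ | ⟨h1, h2⟩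
    · rw [← h1, ← h2]; exact hne e
    · rw [← h1, ← h2]; exact (hne e).symm
  set k0 : Fin 4 := if es e = u then 0 else 3 with hk0
  set x : E × Fin 4 := (e, k0) with hxdef
  have hx0 : letterAt es u x = 0 := by
    by_cases h1 : es e = u
    · simp [letterAt, hxdef, hk0, h1]
    · have h2 : u ≠ es e := fun h => h1 h.symm
      simp [letterAt, hxdef, hk0, h1, h2]
  have hx3 : letterAt es u x ≠ 3 := by rw [hx0]; decide
  have hqx : qval es p γ δ u x = p u e := by
    exact qval_eq0 es p γ δ u x hx0
  have hxincu : (fun c : E × Fin 4 => es c.1) x = u ∨ (fun c : E × Fin 4 => et c.1) x = u := by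
    rcases hvu with ⟨h1, h2⟩ | ⟨h1, h2⟩
    · exact Or.inr h2
    · exact Or.inl h1
  have hxmem : x ∈ incident (fun c : E × Fin 4 => es c.1) (fun c => et c.1) u :=
    mem_incident_iff.2 hxincu
  have hemem : e ∈ incident es et v := by
    refine mem_incident_iff.2 ?_
    rcases hvu with ⟨h1, _⟩ | ⟨_, h2⟩
    · exact Or.inl h1
    · exact Or.inr h2
  have hxlt : M' x < 1 := by
    have h1 : M' x ≤ ∑ k : Fin 4, M' (e, k) :=
      Finset.single_le_sum (f := fun k => M' (e, k)) (fun k _ => hM'f.1 (e, k))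
        (Finset.mem_univ k0)
    have h2 : (∑ k : Fin 4, M' (e, k)) ≤ degSum es et (fun e => ∑ k : Fin 4, M' (e, k)) v :=
      Finset.single_le_sum (f := fun e => ∑ k : Fin 4, M' (e, k))
        (fun e' _ => Finset.sum_nonneg fun k _ => hM'f.1 (e', k)) hemem
    linarith
  have hsb := hstab x
  rw [StrictBlocks] at hsb
  have h2 : ¬ ∀ w, ((fun c : E × Fin 4 => es c.1) x = w ∨ (fun c : E × Fin 4 => et c.1) x = w) →
      (¬ Saturated (fun c : E × Fin 4 => es c.1) (fun c => et c.1) M' w ∨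
        ∃ f ∈ incident (fun c : E × Fin 4 => es c.1) (fun c => et c.1) w,
          0 < M' f ∧ pref' w x f) := fun hall => hsb ⟨hxlt, hall⟩
  push_neg at h2
  obtain ⟨w, hw, hsatw, hallw⟩ := h2
  have hwu : w = u := by
    have hwvu : w = v ∨ w = u := by
      rcases hvu with ⟨h1, h2⟩ | ⟨h1, h2⟩
      · rcases hw with h | h
        · exact Or.inl (h1 ▸ h.symm ▸ rfl)
        · exact Or.inr (h2 ▸ h.symm ▸ rfl)
      · rcases hw with h | h
        · exact Or.inr (h1 ▸ h.symm ▸ rfl)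
        · exact Or.inl (h2 ▸ h.symm ▸ rfl)
    rcases hwvu with h | h
    · exfalso
      rw [Saturated, degSum_copies, h] at hsatw
      exact absurd hsatw (ne_of_lt hv)
    · exact h
  rw [hwu] at hsatw hallw
  rw [Saturated, degSum_copies] at hsatw
  refine ⟨hsatw, ?_⟩
  intro c hcinc hcpos
  have hcmem : c ∈ incident (fun c : E × Fin 4 => es c.1) (fun c => et c.1) u :=
    mem_incident_iff.2 hcinc
  have hnp : ¬ pref' u x c := fun hp' => (hallw c hcmem hcpos) hp'
  by_cases hcx : c = x
  · subst hcx
    exact ⟨hx3, le_of_eq hqx.symm⟩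
  · have htot := (hlin u).2.2 x hxmem c hcmem (fun h => hcx h.symm)
    have hpcx : pref' u c x := htot.resolve_left hnp
    have hasym : ¬ pref' u x c := hnp
    have hl3 : letterAt es u c ≠ 3 := by
      intro h3
      have := hA u x hxmem c hcmem h3 hx3
      have h5 := (hlin u).2.1 c hcmem x hxmem c hcmem hpcx this
      exact (hlin u).1 c hcmem h5
    refine ⟨hl3, ?_⟩
    by_contra hq
    push_neg at hq
    rw [← hqx] at hq
    have := hB u x hxmem c hcmem hx3 hl3 hq
    exact hasym this

lemma claimC (es et : E → V) (hne : ∀ e, es e ≠ et e)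
    (p : V → E → ℝ) (pE : V → ℝ)
    (hp : ∀ v, ∀ e ∈ incident es et v, 0 ≤ p v e)
    (hpE : ∀ v, pE v ≤ 0)
    (γ δ : V → E → ℝ)
    (M' : E × Fin 4 → ℝ)
    (N : E → ℝ) (hNf : IsFrac es et N)
    (hNstab : GammaStable es et p pE γ δ N)
    (key : ∀ (e : E) (v u : V),
      (es e = v ∧ et e = u) ∨ (es e = u ∧ et e = v) →
      degSum es et (fun e => ∑ k : Fin 4, M' (e, k)) v < 1 →
      degSum es et (fun e => ∑ k : Fin 4, M' (e, k)) u = 1 ∧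
      ∀ c : E × Fin 4, (es c.1 = u ∨ et c.1 = u) → 0 < M' c →
        letterAt es u c ≠ 3 ∧ p u e ≤ qval es p γ δ u c)
    (u : V) (hu1 : degSum es et N u = 1)
    (hu2 : ∀ e, (es e = u ∨ et e = u) → 0 < N e →
      degSum es et (fun e => ∑ k : Fin 4, M' (e, k)) (otherEnd es et u e) < 1)
    (f : E) (hfu : es f = u ∨ et f = u)
    (hMf : 0 < ∑ k : Fin 4, M' (f, k))
    (g : E) (hgw : es g = otherEnd es et u f ∨ et g = otherEnd es et u f)
    (hNg : 0 < N g)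
    (hxexp : degSum es et (fun e => ∑ k : Fin 4, M' (e, k))
      (otherEnd es et (otherEnd es et u f) g) < 1) :
    False := by
  classical
  obtain ⟨w, hwdef⟩ : ∃ w, otherEnd es et u f = w := ⟨_, rfl⟩
  rw [hwdef] at hgw hxexp
  -- the min-attaining N-edge at u
  have hex : ∃ e ∈ incident es et u, 0 < N e := by
    by_contra hc
    push_neg at hc
    have h0 : degSum es et N u = 0 :=
      Finset.sum_eq_zero fun e he => le_antisymm (hc e he) (hNf.1 e)
    rw [h0] at hu1; norm_num at hu1
  have hnonempty : ((incident es et u).filter fun e => 0 < N e).Nonempty := by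
    obtain ⟨e, he, hpos⟩ := hex
    exact ⟨e, Finset.mem_filter.2 ⟨he, hpos⟩⟩
  obtain ⟨estar, hestar, hinf⟩ :=
    Finset.exists_mem_eq_inf' hnonempty (p u)
  have hestar_inc : estar ∈ incident es et u := (Finset.mem_filter.1 hestar).1
  have hestar_pos : 0 < N estar := (Finset.mem_filter.1 hestar).2
  have hpu : pval es et p pE N u = p u estar := by
    rw [pval, dif_pos ⟨hu1, hnonempty⟩]
    exact hinf
  -- Fact A at u
  have hexp_star : degSum es et (fun e => ∑ k : Fin 4, M' (e, k)) (otherEnd es et u estar) < 1 :=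
    hu2 estar (mem_incident_iff.1 hestar_inc) hestar_pos
  have hFA := (key estar (otherEnd es et u estar) u
    (endpoints_pair es et estar u (mem_incident_iff.1 hestar_inc)) hexp_star).2
  -- Fact B at w
  have hFB := (key g (otherEnd es et w g) w
    (endpoints_pair es et g w hgw) hxexp).2
  -- pval at w
  have hpw : pval es et p pE N w ≤ p w g := by
    rw [pval]
    split_ifs with h
    · exact Finset.inf'_le (p w) (Finset.mem_filter.2 ⟨mem_incident_iff.2 hgw, hNg⟩)
    · exact le_trans (hpE w) (hp w g (mem_incident_iff.2 hgw))
  -- a positive copy of f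
  have hkex : ∃ k : Fin 4, 0 < M' (f, k) := by
    by_contra hc
    push_neg at hc
    have : (∑ k : Fin 4, M' (f, k)) ≤ 0 := Finset.sum_nonpos fun k _ => hc k
    linarith
  obtain ⟨k, hk⟩ := hkex
  have hwmem : es f = w ∨ et f = w := by
    rw [← hwdef]
    rcases endpoints_pair es et f u hfu with ⟨h1, h2⟩ | ⟨h1, h2⟩
    · exact Or.inl h1
    · exact Or.inr h2
  have hA' := hFA (f, k) (by simpa using hfu) hk
  have hB' := hFB (f, k) (by simpa using hwmem) hk
  have hpuq : pval es et p pE N u ≤ qval es p γ δ u (f, k) := by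
    rw [hpu]; exact hA'.2
  have hpwq : pval es et p pE N w ≤ qval es p γ δ w (f, k) :=
    le_trans hpw hB'.2
  have hune : u ≠ w := by
    rw [← hwdef]
    by_cases h1 : es f = u
    · rw [otherEnd, if_pos h1]
      exact fun h => hne f (h1.trans h)
    · rw [otherEnd, if_neg h1]
      exact fun h => h1 h.symm
  have hcase : ∀ k : Fin 4, k ≠ 3 → (3 : Fin 4) - k ≠ 3 →
      (k = 1 ∧ (3 : Fin 4) - k = 2) ∨ (k = 2 ∧ (3 : Fin 4) - k = 1) := by decide
  apply hNstab f
  by_cases h1 : es f = u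
  · have hwet : et f = w := by rw [← hwdef, otherEnd, if_pos h1]
    have hlu : letterAt es u (f, k) = k := by
      simp [letterAt, h1]
    have hlw : letterAt es w (f, k) = 3 - k := by
      have h5 : w ≠ es f := by rw [h1]; exact hune.symm
      simp [letterAt, h5]
    rcases hcase k (by rw [← hlu]; exact hA'.1) (by rw [← hlw]; exact hB'.1) with
      ⟨hk1, hk2⟩ | ⟨hk1, hk2⟩
    · -- letters (1,2): γ at u = es f, δ at w = et f
      have hq1 := qval_eq1 es p γ δ u (f, k) (by rw [hlu, hk1])
      have hq2 := qval_eq2 es p γ δ w (f, k) (by rw [hlw, hk2])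
      left
      rw [h1, hwet]
      rw [hq1] at hpuq; rw [hq2] at hpwq
      exact le_min (by simp only at hpuq ⊢; linarith) (by simp only at hpwq ⊢; linarith)
    · have hq1 := qval_eq2 es p γ δ u (f, k) (by rw [hlu, hk1])
      have hq2 := qval_eq1 es p γ δ w (f, k) (by rw [hlw, hk2])
      right
      rw [h1, hwet]
      rw [hq1] at hpuq; rw [hq2] at hpwq
      exact le_min (by simp only at hpuq ⊢; linarith) (by simp only at hpwq ⊢; linarith)
  · have hetu : et f = u := hfu.resolve_left h1
    have hwes : es f = w := by
      rw [← hwdef, otherEnd, if_neg h1]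
    have hlw : letterAt es w (f, k) = k := by
      simp [letterAt, hwes]
    have hlu : letterAt es u (f, k) = 3 - k := by
      have h5 : u ≠ es f := by rw [hwes]; exact hune
      simp [letterAt, h5]
    rcases hcase k (by rw [← hlw]; exact hB'.1) (by rw [← hlu]; exact hA'.1) with
      ⟨hk1, hk2⟩ | ⟨hk1, hk2⟩
    · -- letter_w = 1 (γ at w = es f), letter_u = 2 (δ at u = et f): first disjunct
      have hq1 := qval_eq1 es p γ δ w (f, k) (by rw [hlw, hk1])
      have hq2 := qval_eq2 es p γ δ u (f, k) (by rw [hlu, hk2])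
      left
      rw [hetu, hwes]
      rw [hq1] at hpwq; rw [hq2] at hpuq
      exact le_min (by simp only at hpwq ⊢; linarith) (by simp only at hpuq ⊢; linarith)
    · have hq1 := qval_eq2 es p γ δ w (f, k) (by rw [hlw, hk1])
      have hq2 := qval_eq1 es p γ δ u (f, k) (by rw [hlu, hk2])
      right
      rw [hetu, hwes]
      rw [hq1] at hpwq; rw [hq2] at hpuq
      exact le_min (by simp only at hpwq ⊢; linarith) (by simp only at hpuq ⊢; linarith)

noncomputable def rload (es et : E → V) (Mp N : E → ℝ) (u : V) : ℝ :=
  ∑ e ∈ incident es et u, if degSum es et Mp (otherEnd es et u e) < 1 then N e else 0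

lemma counting (es et : E → V) (hne : ∀ e, es e ≠ et e) (Mp N : E → ℝ)
    (hMp0 : ∀ e, 0 ≤ Mp e) (hMpdeg : ∀ v, degSum es et Mp v ≤ 1)
    (hN0 : ∀ e, 0 ≤ N e) (hNdeg : ∀ v, degSum es et N v ≤ 1)
    (hNhalf : ∀ e, N e = 0 ∨ N e = 1/2 ∨ N e = 1)
    (hkey_sat : ∀ e v u, (es e = v ∧ et e = u) ∨ (es e = u ∧ et e = v) →
       degSum es et Mp v < 1 → degSum es et Mp u = 1)
    (hclaim : ∀ u, degSum es et N u = 1 →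
      (∀ e, (es e = u ∨ et e = u) → 0 < N e → degSum es et Mp (otherEnd es et u e) < 1) →
      ∀ f, (es f = u ∨ et f = u) → 0 < Mp f →
      ∀ g, (es g = otherEnd es et u f ∨ et g = otherEnd es et u f) → 0 < N g →
        ¬ degSum es et Mp (otherEnd es et (otherEnd es et u f) g) < 1) :
    size N ≤ 3 / 2 * size Mp := by
  classical
  have hr0 : ∀ u, 0 ≤ rload es et Mp N u := by
    intro u; unfold rload
    refine Finset.sum_nonneg fun e he => ?_
    split
    · exact hN0 e
    · exact le_refl 0
  have hrN : ∀ u, rload es et Mp N u ≤ degSum es et N u := by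
    intro u; unfold rload degSum
    refine Finset.sum_le_sum fun e he => ?_
    split
    · exact le_refl _
    · exact hN0 e
  have hrle1 : ∀ u, rload es et Mp N u ≤ 1 := fun u => le_trans (hrN u) (hNdeg u)
  have hrsat : ∀ u, 0 < rload es et Mp N u → degSum es et Mp u = 1 := by
    intro u hu
    have hex : ∃ e ∈ incident es et u, degSum es et Mp (otherEnd es et u e) < 1 := by
      by_contra hc
      push_neg at hc
      have h0 : rload es et Mp N u = 0 := by
        unfold rload
        exact Finset.sum_eq_zero fun e he => if_neg (not_lt.2 (hc e he))
      linarith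
    obtain ⟨e, he, hlt⟩ := hex
    exact hkey_sat e (otherEnd es et u e) u
      (endpoints_pair es et e u (mem_incident_iff.1 he)) hlt
  have hr1 : ∀ u, 1/2 < rload es et Mp N u →
      degSum es et N u = 1 ∧
      ∀ e, (es e = u ∨ et e = u) → 0 < N e → degSum es et Mp (otherEnd es et u e) < 1 := by
    intro u hu
    obtain ⟨n, hn⟩ := half_sum_int (incident es et u)
      (fun e => if degSum es et Mp (otherEnd es et u e) < 1 then N e else 0)
      (fun e he => by
        split
        · exact hNhalf e
        · exact Or.inl rfl)
    have hru : rload es et Mp N u = n / 2 := hn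
    have h1 : (1 : ℝ) ≤ rload es et Mp N u := by
      rw [hru] at hu ⊢
      have h2 : (1 : ℝ) < (n : ℝ) := by linarith
      have h3 : 1 < n := by exact_mod_cast h2
      have h4 : (2 : ℝ) ≤ (n : ℝ) := by exact_mod_cast h3
      linarith
    have hNu1 : degSum es et N u = 1 := le_antisymm (hNdeg u) (le_trans h1 (hrN u))
    have hru1 : rload es et Mp N u = 1 := le_antisymm (hrle1 u) h1
    refine ⟨hNu1, ?_⟩
    intro e heu hNe
    by_contra hnot
    have hsum1 : ∑ e ∈ incident es et u,
        (if degSum es et Mp (otherEnd es et u e) < 1 then N e else 0) = 1 := hru1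
    have hsum2 : ∑ e ∈ incident es et u, N e = 1 := hNu1
    have hdiff : ∑ e ∈ incident es et u,
        (N e - (if degSum es et Mp (otherEnd es et u e) < 1 then N e else 0)) = 0 := by
      rw [Finset.sum_sub_distrib, hsum1, hsum2]
      ring
    have hterm := (Finset.sum_eq_zero_iff_of_nonneg (fun e' _ => by
        split
        · exact sub_nonneg.2 (le_refl _)
        · simpa using hN0 e')).1 hdiff e (mem_incident_iff.2 heu)
    rw [if_neg hnot] at hterm
    simp at hterm
    exact absurd hterm (ne_of_gt hNe)
  have hclaim' : ∀ u, 1/2 < rload es et Mp N u →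
      ∀ f, (es f = u ∨ et f = u) → 0 < Mp f → rload es et Mp N (otherEnd es et u f) = 0 := by
    intro u hu f hf hMf
    obtain ⟨hNu1, hall⟩ := hr1 u hu
    unfold rload
    refine Finset.sum_eq_zero fun g hg => ?_
    split_ifs with hcond
    · by_contra hg0
      have hNg : 0 < N g := lt_of_le_of_ne (hN0 g) (Ne.symm hg0)
      exact (hclaim u hNu1 hall f hf hMf g (mem_incident_iff.1 hg) hNg) hcond
    · rfl
  have hsizeN : ∑ v, degSum es et N v = 2 * size N := by
    unfold degSum size
    rw [sum_incident es et hne (fun v e => N e), Finset.sum_add_distrib]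
    ring
  have hsizeM : ∑ v, degSum es et Mp v = 2 * size Mp := by
    unfold degSum size
    rw [sum_incident es et hne (fun v e => Mp e), Finset.sum_add_distrib]
    ring
  have hPsplit := Finset.sum_filter_add_sum_filter_not Finset.univ
      (fun v => degSum es et Mp v = 1) (fun v => degSum es et N v)
  have hfilter_eq : Finset.univ.filter (fun v => ¬ degSum es et Mp v = 1)
      = Finset.univ.filter (fun v => degSum es et Mp v < 1) := by
    refine Finset.filter_congr fun v _ => ?_
    constructor
    · exact fun h => lt_of_le_of_ne (hMpdeg v) h
    · exact fun h => ne_of_lt h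
  have hX : ∑ v ∈ Finset.univ.filter (fun v => degSum es et Mp v < 1), degSum es et N v
      = ∑ u, rload es et Mp N u := by
    rw [Finset.sum_filter]
    have hL : ∀ v, (if degSum es et Mp v < 1 then degSum es et N v else 0)
        = ∑ e ∈ incident es et v, (if degSum es et Mp v < 1 then N e else 0) := by
      intro v
      by_cases h : degSum es et Mp v < 1
      · rw [if_pos h]
        exact Finset.sum_congr rfl fun e _ => (if_pos h).symm
      · rw [if_neg h]
        exact (Finset.sum_eq_zero fun e _ => if_neg h).symm
    simp_rw [hL]
    rw [sum_incident es et hne (fun v e => if degSum es et Mp v < 1 then N e else 0)]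
    unfold rload
    rw [sum_incident es et hne
      (fun u e => if degSum es et Mp (otherEnd es et u e) < 1 then N e else 0)]
    refine Finset.sum_congr rfl fun e _ => ?_
    rw [otherEnd_es, otherEnd_et es et hne]
    exact add_comm _ _
  have hsplit_r : ∀ u, rload es et Mp N u
      = min (rload es et Mp N u) (1/2)
        + (if 1/2 < rload es et Mp N u then rload es et Mp N u - 1/2 else 0) := by
    intro u
    split_ifs with h
    · rw [min_eq_right (le_of_lt h)]; ring
    · rw [min_eq_left (not_lt.1 h)]; ring
  have hsend : ∀ u, (if 1/2 < rload es et Mp N u then rload es et Mp N u - 1/2 else 0)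
      = ∑ f ∈ incident es et u,
          (if 1/2 < rload es et Mp N u then (rload es et Mp N u - 1/2) * Mp f else 0) := by
    intro u
    by_cases h : 1/2 < rload es et Mp N u
    · rw [if_pos h]
      have hsum : ∑ f ∈ incident es et u, Mp f = 1 := hrsat u (by linarith)
      calc rload es et Mp N u - 1/2
          = (rload es et Mp N u - 1/2) * ∑ f ∈ incident es et u, Mp f := by
            rw [hsum]; ring
        _ = ∑ f ∈ incident es et u, (rload es et Mp N u - 1/2) * Mp f := Finset.mul_sum _ _ _
        _ = _ := Finset.sum_congr rfl fun f _ => (if_pos h).symm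
    · rw [if_neg h]
      exact (Finset.sum_eq_zero fun f _ => if_neg h).symm
  have htransfer : ∑ u, ∑ f ∈ incident es et u,
        (if 1/2 < rload es et Mp N u then (rload es et Mp N u - 1/2) * Mp f else 0)
      = ∑ v, ∑ f ∈ incident es et v,
        (if 1/2 < rload es et Mp N (otherEnd es et v f)
          then (rload es et Mp N (otherEnd es et v f) - 1/2) * Mp f else 0) := by
    rw [sum_incident es et hne
      (fun u f => if 1/2 < rload es et Mp N u then (rload es et Mp N u - 1/2) * Mp f else 0)]
    rw [sum_incident es et hne
      (fun v f => if 1/2 < rload es et Mp N (otherEnd es et v f)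
        then (rload es et Mp N (otherEnd es et v f) - 1/2) * Mp f else 0)]
    refine Finset.sum_congr rfl fun f _ => ?_
    rw [otherEnd_es, otherEnd_et es et hne]
    exact add_comm _ _
  have hper : ∀ v, min (rload es et Mp N v) (1/2)
      + (∑ f ∈ incident es et v,
          (if 1/2 < rload es et Mp N (otherEnd es et v f)
            then (rload es et Mp N (otherEnd es et v f) - 1/2) * Mp f else 0))
      ≤ 1/2 * degSum es et Mp v := by
    intro v
    have hrecv_le : (∑ f ∈ incident es et v,
        (if 1/2 < rload es et Mp N (otherEnd es et v f)
          then (rload es et Mp N (otherEnd es et v f) - 1/2) * Mp f else 0))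
        ≤ 1/2 * degSum es et Mp v := by
      have hterm : ∀ f ∈ incident es et v,
          (if 1/2 < rload es et Mp N (otherEnd es et v f)
            then (rload es et Mp N (otherEnd es et v f) - 1/2) * Mp f else 0)
          ≤ 1/2 * Mp f := by
        intro f hf
        split_ifs with h
        · have h2 : rload es et Mp N (otherEnd es et v f) - 1/2 ≤ 1/2 := by
            have := hrle1 (otherEnd es et v f); linarith
          exact mul_le_mul_of_nonneg_right h2 (hMp0 f)
        · have := hMp0 f; linarith
      calc (∑ f ∈ incident es et v, _) ≤ ∑ f ∈ incident es et v, 1/2 * Mp f :=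
            Finset.sum_le_sum hterm
        _ = 1/2 * degSum es et Mp v := (Finset.mul_sum _ _ _).symm
    by_cases hP : degSum es et Mp v = 1
    · by_cases hEx : ∃ f ∈ incident es et v,
          0 < Mp f ∧ 1/2 < rload es et Mp N (otherEnd es et v f)
      · obtain ⟨f, hf, hMf, hrf⟩ := hEx
        have hmemf := mem_incident_iff.1 hf
        have hback : otherEnd es et (otherEnd es et v f) f = v :=
          otherEnd_invol es et hne f v hmemf
        have hfmem' : es f = otherEnd es et v f ∨ et f = otherEnd es et v f :=
          otherEnd_mem es et f v hmemf
        have h0 : rload es et Mp N v = 0 := by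
          have := hclaim' (otherEnd es et v f) hrf f hfmem' hMf
          rwa [hback] at this
        rw [h0]
        have hmin : min (0:ℝ) (1/2) = 0 := by norm_num
        rw [hmin]
        linarith
      · push_neg at hEx
        have hrecv0 : (∑ f ∈ incident es et v,
            (if 1/2 < rload es et Mp N (otherEnd es et v f)
              then (rload es et Mp N (otherEnd es et v f) - 1/2) * Mp f else 0)) = 0 := by
          refine Finset.sum_eq_zero fun f hf => ?_
          split_ifs with hc
          · have hMf : Mp f = 0 := by
              by_contra hMf0
              exact absurd hc (not_lt.2 (hEx f hf (lt_of_le_of_ne (hMp0 f) (Ne.symm hMf0))))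
            rw [hMf, mul_zero]
          · rfl
        rw [hrecv0, hP]
        have : min (rload es et Mp N v) (1/2) ≤ 1/2 := min_le_right _ _
        linarith
    · have hlt : degSum es et Mp v < 1 := lt_of_le_of_ne (hMpdeg v) hP
      have h0 : rload es et Mp N v = 0 := by
        by_contra h
        exact hP (hrsat v (lt_of_le_of_ne (hr0 v) (Ne.symm h)))
      rw [h0]
      have hmin : min (0:ℝ) (1/2) = 0 := by norm_num
      rw [hmin]
      linarith
  have h2 : ∑ u, rload es et Mp N u ≤ 1/2 * ∑ v, degSum es et Mp v := by
    calc ∑ u, rload es et Mp N u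
        = ∑ u, (min (rload es et Mp N u) (1/2)
            + (if 1/2 < rload es et Mp N u then rload es et Mp N u - 1/2 else 0)) :=
          Finset.sum_congr rfl fun u _ => hsplit_r u
      _ = ∑ u, min (rload es et Mp N u) (1/2)
            + ∑ u, (if 1/2 < rload es et Mp N u then rload es et Mp N u - 1/2 else 0) :=
          Finset.sum_add_distrib
      _ = ∑ u, min (rload es et Mp N u) (1/2)
            + ∑ u, ∑ f ∈ incident es et u,
              (if 1/2 < rload es et Mp N u then (rload es et Mp N u - 1/2) * Mp f else 0) := by
          rw [Finset.sum_congr rfl fun u _ => hsend u]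
      _ = ∑ u, min (rload es et Mp N u) (1/2)
            + ∑ v, ∑ f ∈ incident es et v,
              (if 1/2 < rload es et Mp N (otherEnd es et v f)
                then (rload es et Mp N (otherEnd es et v f) - 1/2) * Mp f else 0) := by
          rw [htransfer]
      _ = ∑ v, (min (rload es et Mp N v) (1/2)
            + ∑ f ∈ incident es et v,
              (if 1/2 < rload es et Mp N (otherEnd es et v f)
                then (rload es et Mp N (otherEnd es et v f) - 1/2) * Mp f else 0)) :=
          Finset.sum_add_distrib.symm
      _ ≤ ∑ v, 1/2 * degSum es et Mp v := Finset.sum_le_sum fun v _ => hper v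
      _ = 1/2 * ∑ v, degSum es et Mp v := (Finset.mul_sum _ _ _).symm
  have h1 : ∑ v ∈ Finset.univ.filter (fun v => degSum es et Mp v = 1), degSum es et N v
      ≤ ∑ v ∈ Finset.univ.filter (fun v => degSum es et Mp v = 1), degSum es et Mp v := by
    refine Finset.sum_le_sum fun v hv => ?_
    rw [(Finset.mem_filter.1 hv).2]
    exact hNdeg v
  have h3 : ∑ v ∈ Finset.univ.filter (fun v => degSum es et Mp v = 1), degSum es et Mp v
      ≤ ∑ v, degSum es et Mp v :=
    Finset.sum_le_sum_of_subset_of_nonneg (Finset.filter_subset _ _)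
      (fun v _ _ => Finset.sum_nonneg fun e _ => hMp0 e)
  have main : ∑ v, degSum es et N v ≤ 3/2 * ∑ v, degSum es et Mp v := by
    have h4 : ∑ v ∈ Finset.univ.filter (fun v => ¬ degSum es et Mp v = 1), degSum es et N v
        = ∑ u, rload es et Mp N u := by
      rw [hfilter_eq, hX]
    linarith [hPsplit, h1, h2, h3, h4]
  linarith [hsizeN, hsizeM, main]

/-- The projection of a stable half-matching of a 4-copy
instance `3/2`-approximates every `γ`-stable half-matching. -/
theorem projection_three_halves_approx
    {V E : Type*} [Fintype V] [Fintype E] [DecidableEq V] [DecidableEq E]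
    (es et : E → V) (hne : ∀ e, es e ≠ et e)
    (p : V → E → ℝ) (pE : V → ℝ)
    (hp : ∀ v, ∀ e ∈ incident es et v, 0 ≤ p v e)
    (hpE : ∀ v, pE v ≤ 0)
    (γ δ : V → E → ℝ)
    (hγ : ∀ v, ∀ e ∈ incident es et v, 0 < γ v e)
    (hγδ : ∀ v, ∀ e ∈ incident es et v, γ v e < δ v e)
    (pref' : V → (E × Fin 4) → (E × Fin 4) → Prop)
    (hlin : IsStrictPref (fun c => es c.1) (fun c => et c.1) pref')
    (hA : ∀ v, ∀ c ∈ incident (fun c : E × Fin 4 => es c.1) (fun c => et c.1) v,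
      ∀ d ∈ incident (fun c : E × Fin 4 => es c.1) (fun c => et c.1) v,
        letterAt es v d = 3 → letterAt es v c ≠ 3 → pref' v c d)
    (hB : ∀ v, ∀ c ∈ incident (fun c : E × Fin 4 => es c.1) (fun c => et c.1) v,
      ∀ d ∈ incident (fun c : E × Fin 4 => es c.1) (fun c => et c.1) v,
        letterAt es v c ≠ 3 → letterAt es v d ≠ 3 →
        qval es p γ δ v d < qval es p γ δ v c → pref' v c d)
    (hC : ∀ v, ∀ c ∈ incident (fun c : E × Fin 4 => es c.1) (fun c => et c.1) v,
      ∀ d ∈ incident (fun c : E × Fin 4 => es c.1) (fun c => et c.1) v,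
        letterAt es v c ≠ 3 → letterAt es v d ≠ 3 →
        qval es p γ δ v c = qval es p γ δ v d →
        letterAt es v d < letterAt es v c → pref' v c d)
    (hD : ∀ v, ∀ c ∈ incident (fun c : E × Fin 4 => es c.1) (fun c => et c.1) v,
      ∀ d ∈ incident (fun c : E × Fin 4 => es c.1) (fun c => et c.1) v,
        letterAt es v c = 3 → letterAt es v d = 3 →
        p v d.1 < p v c.1 → pref' v c d)
    (M' : E × Fin 4 → ℝ)
    (hM' : IsHalf (fun c => es c.1) (fun c => et c.1) M')
    (hstab : StableStrict (fun c => es c.1) (fun c => et c.1) pref' M') :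
    ∀ N : E → ℝ, IsHalf es et N → GammaStable es et p pE γ δ N →
      size N ≤ 3 / 2 * size (fun e => ∑ k : Fin 4, M' (e, k)) := by
  classical
  intro N hN hNstab
  refine counting es et hne (fun e => ∑ k : Fin 4, M' (e, k)) N
    (fun e => Finset.sum_nonneg fun k _ => hM'.1.1 (e, k))
    (fun v => by rw [← degSum_copies]; exact hM'.1.2 v)
    hN.1.1 hN.1.2 hN.2 ?_ ?_
  · intro e v u hvu hv
    exact (keyL2 es et hne p γ δ pref' hlin hA hB M' hM'.1 hstab e v u hvu hv).1
  · intro u hu1 hu2 f hf hMf g hg hNg hx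
    exact claimC es et hne p pE hp hpE γ δ M' N hN.1 hNstab
      (fun e v u hvu hv => keyL2 es et hne p γ δ pref' hlin hA hB M' hM'.1 hstab e v u hvu hv)
      u hu1 hu2 f hf hMf g hg hNg hx


end SR
end
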